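/- arXiv:1412.4103 — 11 statements merged into one kernel-verified Lean document; each statement's English description precedes it below -/
import Mathlib

section
/- Let f : (ℝ^m,0) → (ℝ^n,0) be a smooth map-germ with m < n and rank df_0 = m−1. Then there exists a smooth vector field η on a neighborhood of 0 in ℝ^m, nowhere vanishing, such that for every singular point p of f near 0 (i.e. every p with rank df_p < m) one has ker df_p = span(η_p). -/
open Filter Topology Matrix

noncomputable section

/-- The `q`-th component of `f` (`0`-indexed), or `0` if `q` is out of range. -/
def comp {m n : ℕ} (f : (Fin m → ℝ) → (Fin n → ℝ)) (q : ℕ) : (Fin m → ℝ) → ℝ :=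
  fun x => if h : q < n then f x ⟨q, h⟩ else 0

/-- The `q`-th coordinate of `x` (`0`-indexed), or `0` if `q` is out of range. -/
def xhat {m : ℕ} (x : Fin m → ℝ) (q : ℕ) : ℝ := if h : q < m then x ⟨q, h⟩ else 0

/-- The partial derivative of `g` at `p` in the `q`-th coordinate direction. -/
def pd {m : ℕ} (g : (Fin m → ℝ) → ℝ) (p : Fin m → ℝ) (q : ℕ) : ℝ :=
  fderiv ℝ g p (fun l : Fin m => if l.val = q then 1 else 0)

/-- The Jacobian matrix of `f` at `p`; its rank is the rank of `df_p`. -/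
def jac {m n : ℕ} (f : (Fin m → ℝ) → (Fin n → ℝ)) (p : Fin m → ℝ) : Matrix (Fin n) (Fin m) ℝ :=
  Matrix.of fun i l => pd (comp f i.val) p l.val

/-- `lam f i` is the paper's `λ_{i+1}` (here `i` is `0`-indexed, `0 ≤ i ≤ n-m`):
the determinant of the `m×m` matrix whose rows are the gradients of
`f_0, …, f_{m-2}, f_{m-1+i}` (`0`-indexed components). -/
def lam {m n : ℕ} (f : (Fin m → ℝ) → (Fin n → ℝ)) (i : ℕ) (p : Fin m → ℝ) : ℝ :=
  Matrix.det (Matrix.of fun (k l : Fin m) =>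
    pd (comp f (if k.val < m - 1 then k.val else m - 1 + i)) p l.val)

/-- `Λ = (λ_1, …, λ_{n-m+1}) : ℝ^m → ℝ^{n-m+1}`. -/
def Lam {m n : ℕ} (f : (Fin m → ℝ) → (Fin n → ℝ)) (p : Fin m → ℝ) : Fin (n - m + 1) → ℝ :=
  fun i => lam f i.val p

/-- The Jacobian matrix of `Λ` at `p`. -/
def dLam {m n : ℕ} (f : (Fin m → ℝ) → (Fin n → ℝ)) (p : Fin m → ℝ) :
    Matrix (Fin (n - m + 1)) (Fin m) ℝ :=
  Matrix.of fun i l => pd (fun x => Lam f x i) p l.val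

/-- `etaIter f η j = η^jΛ`, the `j`-fold iterated directional derivative of `Λ` along `η`. -/
def etaIter {m n : ℕ} (f : (Fin m → ℝ) → (Fin n → ℝ)) (η : (Fin m → ℝ) → (Fin m → ℝ)) :
    ℕ → (Fin m → ℝ) → (Fin (n - m + 1) → ℝ)
  | 0 => Lam f
  | j + 1 => fun p => fderiv ℝ (etaIter f η j) p (η p)

/-- The Jacobian matrix of `(Λ, ηΛ, …, η^jΛ) : ℝ^m → ℝ^{(j+1)(n-m+1)}` at `p`. -/
def stackJac {m n : ℕ} (f : (Fin m → ℝ) → (Fin n → ℝ)) (η : (Fin m → ℝ) → (Fin m → ℝ))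
    (j : ℕ) (p : Fin m → ℝ) : Matrix (Fin (j + 1) × Fin (n - m + 1)) (Fin m) ℝ :=
  Matrix.of fun si l => pd (fun x => etaIter f η si.1.val x si.2) p l.val

/-- A diffeomorphism-germ `(ℝ^k,0) → (ℝ^k,0)`: it fixes `0`, is smooth at `0` and its
differential at `0` is invertible (so by the inverse function theorem it is a germ of a
diffeomorphism). -/
def IsDiffeoGerm {k : ℕ} (σ : (Fin k → ℝ) → (Fin k → ℝ)) : Prop :=
  σ 0 = 0 ∧ ContDiffAt ℝ (⊤ : ℕ∞) σ 0 ∧ LinearMap.det ((fderiv ℝ σ 0).toLinearMap) ≠ 0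

/-- An orientation-preserving diffeomorphism-germ `(ℝ^k,0) → (ℝ^k,0)`. -/
def IsOPDiffeoGerm {k : ℕ} (σ : (Fin k → ℝ) → (Fin k → ℝ)) : Prop :=
  σ 0 = 0 ∧ ContDiffAt ℝ (⊤ : ℕ∞) σ 0 ∧ 0 < LinearMap.det ((fderiv ℝ σ 0).toLinearMap)

/-- `A`-equivalence of map-germs at `0`. -/
def AEquiv {m n : ℕ} (f g : (Fin m → ℝ) → (Fin n → ℝ)) : Prop :=
  ∃ (φ : (Fin m → ℝ) → (Fin m → ℝ)) (Φ : (Fin n → ℝ) → (Fin n → ℝ)),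
    IsDiffeoGerm φ ∧ IsDiffeoGerm Φ ∧ ∀ᶠ x in 𝓝 0, Φ (f (φ x)) = g x

/-- The Morin normal form `h_{0,r} : (ℝ^m,0) → (ℝ^n,0)` (all indices `0`-indexed):
`h_{0,r}(x) = (x_1, …, x_{m-1}, h_1(x), …, h_{n-m+1}(x))` with
`h_i(x) = Σ_{j=1}^r x_{(i-1)r+j} x_m^j` for `i = 1, …, n-m` and
`h_{n-m+1}(x) = Σ_{j=1}^{r-1} x_{(n-m)r+j} x_m^j + x_m^{r+1}`. -/
def hMorinNF (m n r : ℕ) : (Fin m → ℝ) → (Fin n → ℝ) := fun x k =>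
  if k.val < m - 1 then xhat x k.val
  else if k.val - (m - 1) < n - m then
    ∑ j ∈ Finset.range r, xhat x ((k.val - (m - 1)) * r + j) * (xhat x (m - 1)) ^ (j + 1)
  else
    (∑ j ∈ Finset.range (r - 1), xhat x ((n - m) * r + j) * (xhat x (m - 1)) ^ (j + 1))
      + (xhat x (m - 1)) ^ (r + 1)

/-- The normal form `h_{r,(ε₁,ε₂)}(x) = (ε₁x_1, x_2, …, x_{m-1},
ε₁x_1x_m + Σ_{j=2}^r x_jx_m^j, h_2(x), …, h_{n-m}(x), ε₂h_{n-m+1}(x))`. -/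
def hSign (m n r : ℕ) (e1 e2 : ℝ) : (Fin m → ℝ) → (Fin n → ℝ) := fun x k =>
  if k.val = 0 then e1 * xhat x 0
  else if k.val < m - 1 then xhat x k.val
  else if k.val = m - 1 then
    e1 * xhat x 0 * xhat x (m - 1)
      + ∑ j ∈ Finset.Ico 1 r, xhat x j * (xhat x (m - 1)) ^ (j + 1)
  else if k.val - (m - 1) < n - m then
    ∑ j ∈ Finset.range r, xhat x ((k.val - (m - 1)) * r + j) * (xhat x (m - 1)) ^ (j + 1)
  else
    e2 * ((∑ j ∈ Finset.range (r - 1), xhat x ((n - m) * r + j) * (xhat x (m - 1)) ^ (j + 1))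
      + (xhat x (m - 1)) ^ (r + 1))

/-! Since `df_0` has rank `m - 1`, some `m - 1` rows of the Jacobian are linearly independent at
`0`. Their generalized cross product, the vector of signed maximal minors, is a smooth vector field
`η` annihilated by these rows, and `η ≠ 0` exactly where the rows stay independent, in particular
near `0`. At a singular point in that neighbourhood the chosen rows then span the whole row space
of the Jacobian, so its kernel is the line through `η`. -/

namespace Matrix

variable {R K : Type*} [CommRing R] [Field K]

/-- The generalized cross product of the `k` rows of `B` in `R^(k+1)`. -/
def crossVec {k : ℕ} (B : Matrix (Fin k) (Fin (k + 1)) R) : Fin (k + 1) → R :=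
  fun l => (-1) ^ (l : ℕ) * (B.submatrix id l.succAbove).det

theorem det_of_cons_eq_dotProduct_crossVec {k : ℕ} (w : Fin (k + 1) → R)
    (B : Matrix (Fin k) (Fin (k + 1)) R) :
    (of (vecCons w B)).det = w ⬝ᵥ crossVec B := by
  rw [det_succ_row_zero, dotProduct]
  refine Finset.sum_congr rfl fun l _ => ?_
  have hminor : (of (vecCons w B)).submatrix Fin.succ l.succAbove = B.submatrix id l.succAbove :=
    rfl
  rw [hminor, show of (vecCons w B) 0 l = w l from rfl, crossVec]
  ring

theorem mulVec_crossVec {k : ℕ} (B : Matrix (Fin k) (Fin (k + 1)) R) : B *ᵥ crossVec B = 0 := by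
  funext i
  rw [mulVec, ← det_of_cons_eq_dotProduct_crossVec]
  exact det_zero_of_row_eq (Fin.succ_ne_zero i).symm rfl

theorem crossVec_ne_zero_iff {k : ℕ} {B : Matrix (Fin k) (Fin (k + 1)) K} :
    crossVec B ≠ 0 ↔ LinearIndependent K B.row := by
  constructor
  · intro h
    obtain ⟨l, hl⟩ := Function.ne_iff.mp h
    have hdet : (B.submatrix id l.succAbove).det ≠ 0 := fun h0 => hl (by simp [crossVec, h0])
    have hunit : IsUnit (B.submatrix id l.succAbove) := (isUnit_iff_isUnit_det _).2 hdet.isUnit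
    exact (linearIndependent_rows_iff_isUnit.2 hunit).of_comp (LinearMap.funLeft K K l.succAbove)
  · -- completing the rows by a vector outside their span gives a nonzero `w ⬝ᵥ crossVec B`
    intro h hzero
    have hspan : Submodule.span K (Set.range B.row) ≠ ⊤ := by
      intro htop
      have := finrank_span_eq_card h
      rw [htop, finrank_top] at this
      simp at this
    obtain ⟨w, hw⟩ := SetLike.exists_not_mem_of_ne_top _ hspan rfl
    have hrows : LinearIndependent K (of (vecCons w B)).row :=
      linearIndependent_finCons.2 ⟨h, hw⟩
    have hdet := ((isUnit_iff_isUnit_det _).1 (linearIndependent_rows_iff_isUnit.1 hrows)).ne_zero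
    rw [det_of_cons_eq_dotProduct_crossVec, hzero, dotProduct_zero] at hdet
    exact hdet rfl

theorem rank_add_finrank_ker {m n : Type*} [Fintype n] (A : Matrix m n K) :
    A.rank + Module.finrank K (LinearMap.ker A.mulVecLin) = Fintype.card n := by
  rw [rank, LinearMap.finrank_range_add_finrank_ker, Module.finrank_fintype_fun_eq_card]

theorem ker_mulVecLin_eq_span_crossVec {k : ℕ} {B : Matrix (Fin k) (Fin (k + 1)) K}
    (h : crossVec B ≠ 0) : LinearMap.ker B.mulVecLin = Submodule.span K {crossVec B} := by
  have hrank : B.rank = k := by simpa using (crossVec_ne_zero_iff.1 h).rank_matrix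
  have hker := rank_add_finrank_ker B
  rw [hrank, Fintype.card_fin] at hker
  refine (Submodule.eq_of_le_of_finrank_le ?_ ?_).symm
  · rw [Submodule.span_singleton_le_iff_mem, LinearMap.mem_ker, mulVecLin_apply]
    exact mulVec_crossVec B
  · rw [finrank_span_singleton h]
    omega

theorem ker_mulVecLin_eq_of_rank_le_rank_submatrix {m n ι : Type*} [Fintype n]
    (A : Matrix m n K) (r : ι → m) (h : A.rank ≤ (A.submatrix r id).rank) :
    LinearMap.ker A.mulVecLin = LinearMap.ker (A.submatrix r id).mulVecLin := by
  refine Submodule.eq_of_le_of_finrank_le (fun v hv => ?_) ?_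
  · rw [LinearMap.mem_ker, mulVecLin_apply] at hv ⊢
    exact funext fun i => congrFun hv (r i)
  · have := rank_add_finrank_ker A
    have := rank_add_finrank_ker (A.submatrix r id)
    omega

theorem exists_linearIndependent_rows_of_rank_eq {m n : Type*} [Finite m] [Fintype n] {k : ℕ}
    (A : Matrix m n K) (h : A.rank = k) :
    ∃ r : Fin k → m, LinearIndependent K (A.submatrix r id).row := by
  obtain ⟨κ, a, ha, hspan, hli⟩ := exists_linearIndependent' K A.row
  have : Finite κ := .of_injective a ha
  have := Fintype.ofFinite κ
  have hcard : Fintype.card κ = k := by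
    rw [← h, rank_eq_finrank_span_row, ← hspan, finrank_span_eq_card hli]
  obtain e := (Fintype.equivFinOfCardEq hcard).symm
  exact ⟨a ∘ e, hli.comp e e.injective⟩

end Matrix

section Smoothness

variable {𝕜 E : Type*} [NontriviallyNormedField 𝕜] [NormedAddCommGroup E] [NormedSpace 𝕜 E]
  {n : WithTop ℕ∞}

theorem ContDiff.matrix_det {ι : Type*} [Fintype ι] [DecidableEq ι] {M : E → Matrix ι ι 𝕜}
    (h : ∀ i j, ContDiff 𝕜 n fun x => M x i j) : ContDiff 𝕜 n fun x => (M x).det := by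
  simp_rw [Matrix.det_apply']
  exact ContDiff.sum fun σ _ => contDiff_const.mul (contDiff_prod fun i _ => h (σ i) i)

theorem ContDiff.matrix_crossVec {k : ℕ} {B : E → Matrix (Fin k) (Fin (k + 1)) 𝕜}
    (h : ∀ i j, ContDiff 𝕜 n fun x => B x i j) : ContDiff 𝕜 n fun x => (B x).crossVec :=
  contDiff_pi.2 fun l => contDiff_const.mul (ContDiff.matrix_det fun i j => h i (l.succAbove j))

end Smoothness

section Jacobian

variable {m n : ℕ} {f : (Fin m → ℝ) → (Fin n → ℝ)}

theorem jac_eq_toMatrix' {p : Fin m → ℝ} (hf : DifferentiableAt ℝ f p) :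
    jac f p = LinearMap.toMatrix' (fderiv ℝ f p : (Fin m → ℝ) →ₗ[ℝ] (Fin n → ℝ)) := by
  ext i l
  have hbasis : (fun l' : Fin m => if l'.val = l.val then (1 : ℝ) else 0) = Pi.single l 1 := by
    funext l'; simp [Pi.single_apply, Fin.val_inj]
  have hcomp : _root_.comp f i.val = fun x => f x i := funext fun x => by simp [_root_.comp]
  simp [jac, pd, hbasis, hcomp, fderiv_apply hf]

theorem ker_fderiv_eq_ker_mulVecLin_jac {p : Fin m → ℝ} (hf : DifferentiableAt ℝ f p) :
    LinearMap.ker (fderiv ℝ f p).toLinearMap = LinearMap.ker (jac f p).mulVecLin := by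
  rw [jac_eq_toMatrix' hf, ← Matrix.toLin'_apply', Matrix.toLin'_toMatrix']

theorem ContDiff.jac_apply {k : WithTop ℕ∞} (hf : ContDiff ℝ (k + 1) f) (i : Fin n) (l : Fin m) :
    ContDiff ℝ k fun p => jac f p i l := by
  have hdiff : Differentiable ℝ f := hf.differentiable (by simp)
  simp_rw [jac_eq_toMatrix' (hdiff _), LinearMap.toMatrix'_apply]
  exact contDiff_pi.1 ((hf.fderiv_right le_rfl).clm_apply contDiff_const) i

end Jacobian

theorem stmt3_general {m n : ℕ} (hm : 0 < m)
    (f : (Fin m → ℝ) → (Fin n → ℝ))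
    (hf : ContDiff ℝ (⊤ : ℕ∞) f)
    (hrankf : Matrix.rank (jac f 0) = m - 1) :
    ∃ U ∈ 𝓝 (0 : Fin m → ℝ), ∃ η : (Fin m → ℝ) → (Fin m → ℝ),
      ContDiffOn ℝ (⊤ : ℕ∞) η U ∧ (∀ p ∈ U, η p ≠ 0) ∧
      ∀ p ∈ U, Matrix.rank (jac f p) < m →
        LinearMap.ker (fderiv ℝ f p).toLinearMap = Submodule.span ℝ {η p} := by
  obtain ⟨k, rfl⟩ : ∃ k, m = k + 1 := ⟨m - 1, by omega⟩
  obtain ⟨r, hr⟩ := (jac f 0).exists_linearIndependent_rows_of_rank_eq hrankf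
  set η := fun p => ((jac f p).submatrix r id).crossVec
  have hη : ContDiff ℝ (⊤ : ℕ∞) η :=
    ContDiff.matrix_crossVec fun i l => (hf.of_le (by simp)).jac_apply (r i) l
  refine ⟨{p | η p ≠ 0}, (isOpen_ne_fun hη.continuous continuous_const).mem_nhds
    (crossVec_ne_zero_iff.2 hr), η, hη.contDiffOn, fun p hp => hp, fun p hp hrank => ?_⟩
  have hrank_sub : ((jac f p).submatrix r id).rank = k := by
    simpa using (crossVec_ne_zero_iff.1 hp).rank_matrix
  rw [ker_fderiv_eq_ker_mulVecLin_jac (hf.differentiable (by simp) p),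
    ker_mulVecLin_eq_of_rank_le_rank_submatrix _ r (by omega), ker_mulVecLin_eq_span_crossVec hp]

/-- Existence of a null vector field: a nowhere vanishing smooth vector
field `η` on a neighborhood of `0` such that `ker df_p = span(η_p)` at every singular
point `p` near `0`. -/
theorem stmt3 {m n : ℕ} (hm : 0 < m) (hmn : m < n)
    (f : (Fin m → ℝ) → (Fin n → ℝ))
    (hf : ContDiff ℝ (⊤ : ℕ∞) f) (hf0 : f 0 = 0)
    (hrankf : Matrix.rank (jac f 0) = m - 1) :
    ∃ U ∈ 𝓝 (0 : Fin m → ℝ), ∃ η : (Fin m → ℝ) → (Fin m → ℝ),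
      ContDiffOn ℝ (⊤ : ℕ∞) η U ∧ (∀ p ∈ U, η p ≠ 0) ∧
      ∀ p ∈ U, Matrix.rank (jac f p) < m →
        LinearMap.ker (fderiv ℝ f p).toLinearMap = Submodule.span ℝ {η p} :=
  stmt3_general hm f hf hrankf
end
end

section
/- The singular point 0 of f is 2-non-degenerate (i.e. 0 is non-degenerate, ηΛ(0) = 0, and d(ηΛ)_0(T_0S(f)) = ℝ^{n−m+1}) if and only if Λ(0) = 0, ηΛ(0) = 0, and rank d(Λ,ηΛ)_0 = 2(n−m+1). -/
/-!
Since the gradients of `f_{m-1+i}` vanish at `0`, every determinant `λ_i` has a zero row there,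
so `Λ(0) = 0` holds automatically. The rows of `d(Λ,ηΛ)_0` represent `v ↦ (dΛ_0 v, d(ηΛ)_0 v)`,
and full rank means this map is onto; a pair of linear maps `(A, B)` is jointly onto exactly when
`A` is onto and `B` maps `ker A` onto the target of `B`.
-/

open Filter Topology Matrix

noncomputable section

theorem Matrix.rank_eq_card_iff_surjective_mulVec {K ι κ : Type*} [Field K] [Fintype ι]
    [Fintype κ] (M : Matrix ι κ K) :
    M.rank = Fintype.card ι ↔ Function.Surjective M.mulVec := by
  rw [Matrix.rank, ← Module.finrank_fintype_fun_eq_card (R := K),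
    ← Submodule.eq_top_iff_finrank_eq, LinearMap.range_eq_top]
  rfl

theorem LinearMap.surjective_prod_iff {R V W W' : Type*} [Ring R] [AddCommGroup V]
    [AddCommGroup W] [AddCommGroup W'] [Module R V] [Module R W] [Module R W']
    (A : V →ₗ[R] W) (B : V →ₗ[R] W') :
    Function.Surjective (A.prod B) ↔
      Function.Surjective A ∧ (LinearMap.ker A).map B = ⊤ := by
  constructor
  · intro h
    refine ⟨fun w => ?_, Submodule.eq_top_iff'.mpr fun w' => ?_⟩
    · obtain ⟨v, hv⟩ := h (w, 0)
      exact ⟨v, congrArg Prod.fst hv⟩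
    · obtain ⟨v, hv⟩ := h (0, w')
      exact ⟨v, congrArg Prod.fst hv, congrArg Prod.snd hv⟩
  · rintro ⟨hA, hB⟩ ⟨w, w'⟩
    obtain ⟨x, rfl⟩ := hA w
    obtain ⟨y, hy, hBy⟩ : w' - B x ∈ (LinearMap.ker A).map B := hB ▸ Submodule.mem_top
    refine ⟨x + y, Prod.ext ?_ ?_⟩
    · simp [LinearMap.mem_ker.mp hy]
    · simp [hBy]

theorem of_pd_mulVec_apply {m : ℕ} {ι : Type*} [Fintype ι] (g : ι → (Fin m → ℝ) → ℝ)
    (p v : Fin m → ℝ) (i : ι) :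
    ((Matrix.of fun i (l : Fin m) => pd (g i) p l.val) *ᵥ v) i = fderiv ℝ (g i) p v := by
  have h := (fderiv ℝ (g i) p : (Fin m → ℝ) →ₗ[ℝ] ℝ).pi_apply_eq_sum_univ v
  rw [ContinuousLinearMap.coe_coe] at h
  rw [h]
  simp only [Matrix.mulVec, dotProduct, Matrix.of_apply, pd, Fin.val_inj, smul_eq_mul,
    mul_comm, eq_comm]

theorem contDiff_comp {m n : ℕ} {f : (Fin m → ℝ) → (Fin n → ℝ)} (hf : ContDiff ℝ (⊤ : ℕ∞) f)
    (q : ℕ) : ContDiff ℝ (⊤ : ℕ∞) (_root_.comp f q) := by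
  unfold _root_.comp
  by_cases h : q < n
  · simpa [h] using contDiff_pi.mp hf ⟨q, h⟩
  · simpa [h] using contDiff_const

theorem contDiff_pd {m : ℕ} {g : (Fin m → ℝ) → ℝ} (hg : ContDiff ℝ (⊤ : ℕ∞) g) (q : ℕ) :
    ContDiff ℝ (⊤ : ℕ∞) (fun p => pd g p q) :=
  (hg.fderiv_right (by exact_mod_cast le_top)).clm_apply contDiff_const

theorem contDiff_Lam {m n : ℕ} {f : (Fin m → ℝ) → (Fin n → ℝ)} (hf : ContDiff ℝ (⊤ : ℕ∞) f) :
    ContDiff ℝ (⊤ : ℕ∞) (Lam f) := by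
  refine contDiff_pi.mpr fun i => ?_
  simp only [Lam, lam, Matrix.det_apply', Matrix.of_apply]
  exact ContDiff.sum fun σ _ => contDiff_const.mul
    (contDiff_prod fun k _ => contDiff_pd (contDiff_comp hf _) _)

theorem contDiff_etaIter {m n : ℕ} {f : (Fin m → ℝ) → (Fin n → ℝ)}
    {η : (Fin m → ℝ) → (Fin m → ℝ)} (hf : ContDiff ℝ (⊤ : ℕ∞) f) (hη : ContDiff ℝ (⊤ : ℕ∞) η) :
    ∀ j, ContDiff ℝ (⊤ : ℕ∞) (etaIter f η j)
  | 0 => contDiff_Lam hf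
  | j + 1 => ((contDiff_etaIter hf hη j).fderiv_right (by exact_mod_cast le_top)).clm_apply hη

theorem dLam_mulVec {m n : ℕ} {f : (Fin m → ℝ) → (Fin n → ℝ)} (hf : ContDiff ℝ (⊤ : ℕ∞) f)
    (p : Fin m → ℝ) : (dLam f p).mulVec = fderiv ℝ (Lam f) p := by
  ext v i
  rw [dLam, of_pd_mulVec_apply (fun i x => Lam f x i),
    fderiv_apply ((contDiff_Lam hf).differentiable (by simp) p)]
  rfl

theorem stackJac_mulVec_apply {m n : ℕ} {f : (Fin m → ℝ) → (Fin n → ℝ)}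
    {η : (Fin m → ℝ) → (Fin m → ℝ)} (hf : ContDiff ℝ (⊤ : ℕ∞) f) (hη : ContDiff ℝ (⊤ : ℕ∞) η)
    (j : ℕ) (p v : Fin m → ℝ) (i : Fin (j + 1)) (k : Fin (n - m + 1)) :
    (stackJac f η j p *ᵥ v) (i, k) = fderiv ℝ (etaIter f η i) p v k := by
  refine (of_pd_mulVec_apply _ p v (i, k)).trans ?_
  rw [fderiv_apply ((contDiff_etaIter hf hη i).differentiable (by simp) p)]
  rfl

theorem Lam_eq_zero_of_pd_eq_zero {m n : ℕ} (hm : 0 < m) (f : (Fin m → ℝ) → (Fin n → ℝ))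
    (p : Fin m → ℝ)
    (h : ∀ i : Fin (n - m + 1), ∀ l : Fin m, pd (comp f (m - 1 + i.val)) p l.val = 0) :
    Lam f p = 0 := by
  funext i
  refine Matrix.det_eq_zero_of_row_eq_zero ⟨m - 1, Nat.sub_lt hm one_pos⟩ fun l => ?_
  simpa using h i l

theorem stmt5_general {m n : ℕ} (hm : 0 < m)
    (f : (Fin m → ℝ) → (Fin n → ℝ))
    (hf : ContDiff ℝ (⊤ : ℕ∞) f)
    (hnorm2 : ∀ i : Fin (n - m + 1), ∀ l : Fin m, pd (comp f (m - 1 + i.val)) 0 l.val = 0)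
    (η : (Fin m → ℝ) → (Fin m → ℝ)) (hηs : ContDiff ℝ (⊤ : ℕ∞) η) :
    (Matrix.rank (dLam f 0) = n - m + 1 ∧ etaIter f η 1 0 = 0 ∧
        Submodule.map (fderiv ℝ (etaIter f η 1) 0).toLinearMap
          (LinearMap.ker (fderiv ℝ (Lam f) 0).toLinearMap) = ⊤) ↔
      (Lam f 0 = 0 ∧ etaIter f η 1 0 = 0 ∧
        Matrix.rank (stackJac f η 1 0) = 2 * (n - m + 1)) := by
  set A := (fderiv ℝ (Lam f) 0).toLinearMap
  set B := (fderiv ℝ (etaIter f η 1) 0).toLinearMap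
  let e : (Fin (n - m + 1) → ℝ) × (Fin (n - m + 1) → ℝ) ≃ (Fin 2 × Fin (n - m + 1) → ℝ) :=
    (piFinTwoEquiv fun _ => Fin (n - m + 1) → ℝ).symm.trans (Equiv.curry _ _ _).symm
  have hstack : (stackJac f η 1 0).mulVec = e ∘ A.prod B := by
    ext v ⟨i, k⟩
    rw [stackJac_mulVec_apply hf hηs]
    fin_cases i <;> rfl
  have hrankΛ : (dLam f 0).rank = n - m + 1 ↔ Function.Surjective A := by
    have h := (dLam f 0).rank_eq_card_iff_surjective_mulVec
    rwa [Fintype.card_fin, dLam_mulVec hf] at h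
  have hrankstack :
      (stackJac f η 1 0).rank = 2 * (n - m + 1) ↔ Function.Surjective (A.prod B) := by
    have h := (stackJac f η 1 0).rank_eq_card_iff_surjective_mulVec
    rwa [Fintype.card_prod, Fintype.card_fin, Fintype.card_fin, hstack,
      Equiv.comp_surjective] at h
  rw [hrankΛ, hrankstack, LinearMap.surjective_prod_iff]
  simp only [Lam_eq_zero_of_pd_eq_zero hm f 0 hnorm2, true_and]
  tauto

/-- `0` is `2`-non-degenerate (`0` is non-degenerate, `ηΛ(0) = 0`, and
`d(ηΛ)_0(T_0S(f)) = ℝ^{n-m+1}`, where `T_0S(f) = ker dΛ_0`) if and only if `Λ(0) = 0`,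
`ηΛ(0) = 0` and `rank d(Λ,ηΛ)_0 = 2(n-m+1)`. -/
theorem stmt5 {m n : ℕ} (hm : 0 < m) (hmn : m < n)
    (f : (Fin m → ℝ) → (Fin n → ℝ))
    (hf : ContDiff ℝ (⊤ : ℕ∞) f) (hf0 : f 0 = 0)
    (hrankf : Matrix.rank (jac f 0) = m - 1)
    (hnorm1 : Matrix.rank (Matrix.of fun (k : Fin (m - 1)) (l : Fin m) =>
      pd (comp f k.val) 0 l.val) = m - 1)
    (hnorm2 : ∀ i : Fin (n - m + 1), ∀ l : Fin m, pd (comp f (m - 1 + i.val)) 0 l.val = 0)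
    (η : (Fin m → ℝ) → (Fin m → ℝ)) (hηs : ContDiff ℝ (⊤ : ℕ∞) η)
    (hηker : ∀ᶠ p in 𝓝 (0 : Fin m → ℝ), Matrix.rank (jac f p) < m →
      LinearMap.ker (fderiv ℝ f p).toLinearMap = Submodule.span ℝ {η p}) :
    (Matrix.rank (dLam f 0) = n - m + 1 ∧ etaIter f η 1 0 = 0 ∧
        Submodule.map (fderiv ℝ (etaIter f η 1) 0).toLinearMap
          (LinearMap.ker (fderiv ℝ (Lam f) 0).toLinearMap) = ⊤) ↔
      (Lam f 0 = 0 ∧ etaIter f η 1 0 = 0 ∧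
        Matrix.rank (stackJac f η 1 0) = 2 * (n - m + 1)) :=
  stmt5_general hm f hf hnorm2 η hηs
end
end

section
/- Assume the 2n vectors δ_1(t),…,δ_n(t),δ_1'(t),…,δ_n'(t) are linearly independent for each t and δ_i·δ_j' ≡ 0 for all i,j. Then the n×n Gram matrix G(t) = (δ_i'(t)·δ_j'(t))_{i,j} is invertible for every t, and the curve σ(t) = γ(t) + Σ_{i=1}^n u_i(t)δ_i(t), where (u_1(t),…,u_n(t)) = −G(t)^{−1}(γ'(t)·δ_1'(t),…,γ'(t)·δ_n'(t)), is a striction curve: σ'(t)·δ_i'(t) = 0 for all t and all i = 1,…,n. -/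
open Filter Topology Matrix

noncomputable section

/-- The standard inner product on `ℝ^N`. -/
def dp {N : ℕ} (v w : Fin N → ℝ) : ℝ := ∑ i, v i * w i

/-- The Gram matrix `G(t) = (δ_i'(t) · δ_j'(t))_{i,j}`. -/
def gram {n : ℕ} (δ : Fin n → ℝ → (Fin (2 * n) → ℝ)) (t : ℝ) : Matrix (Fin n) (Fin n) ℝ :=
  Matrix.of fun i j => dp (deriv (δ i) t) (deriv (δ j) t)

/-- `(u_1(t), …, u_n(t)) = - G(t)⁻¹ (γ'(t)·δ_1'(t), …, γ'(t)·δ_n'(t))`. -/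
def strictU {n : ℕ} (γ : ℝ → (Fin (2 * n) → ℝ)) (δ : Fin n → ℝ → (Fin (2 * n) → ℝ))
    (t : ℝ) : Fin n → ℝ :=
  -((gram δ t)⁻¹.mulVec (fun i => dp (deriv γ t) (deriv (δ i) t)))

/-- The curve `σ(t) = γ(t) + Σ_i u_i(t) δ_i(t)`. -/
def strictCurve {n : ℕ} (γ : ℝ → (Fin (2 * n) → ℝ)) (δ : Fin n → ℝ → (Fin (2 * n) → ℝ))
    (t : ℝ) : Fin (2 * n) → ℝ :=
  γ t + ∑ i, strictU γ δ t i • δ i t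

/-- The one-parameter family of `n`-planes `F_{(γ,δ)}(t,u) = γ(t) + Σ_i u_i δ_i(t)`. -/
def ruled {n : ℕ} (γ : ℝ → (Fin (2 * n) → ℝ)) (δ : Fin n → ℝ → (Fin (2 * n) → ℝ)) :
    ℝ × (Fin n → ℝ) → (Fin (2 * n) → ℝ) :=
  fun p => γ p.1 + ∑ i, p.2 i • δ i p.1

/-- `F_{(γ,δ)}` viewed as a map `ℝ^{n+1} → ℝ^{2n}`, `x = (t, u_1, …, u_n)`. -/
def ruledF {n : ℕ} (γ : ℝ → (Fin (2 * n) → ℝ)) (δ : Fin n → ℝ → (Fin (2 * n) → ℝ)) :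
    (Fin (n + 1) → ℝ) → (Fin (2 * n) → ℝ) :=
  fun x => γ (x 0) + ∑ i, x i.succ • δ i (x 0)

/-- The point `(t₀, 0, …, 0) ∈ ℝ^{n+1}`. -/
def bpt {n : ℕ} (t₀ : ℝ) : Fin (n + 1) → ℝ := fun k => if k = 0 then t₀ else 0

def xhat' {m : ℕ} (x : Fin m → ℝ) (q : ℕ) : ℝ := if h : q < m then x ⟨q, h⟩ else 0

/-- The `1`-Morin (Whitney-umbrella type) normal form
`(x_1, …, x_n, x_1x_{n+1}, …, x_{n-1}x_{n+1}, x_{n+1}²) : (ℝ^{n+1},0) → (ℝ^{2n},0)`. -/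
def whitneyNF (n : ℕ) : (Fin (n + 1) → ℝ) → (Fin (2 * n) → ℝ) := fun x k =>
  if k.val < n then xhat' x k.val
  else if k.val < 2 * n - 1 then xhat' x (k.val - n) * xhat' x n
  else (xhat' x n) ^ 2

/-- `δ_q(t)` with a `ℕ` index (`0` if out of range). -/
def dhat {n : ℕ} (δ : Fin n → ℝ → (Fin (2 * n) → ℝ)) (q : ℕ) (t : ℝ) : Fin (2 * n) → ℝ :=
  if h : q < n then δ ⟨q, h⟩ t else 0

/-- `δ_q'(t)` with a `ℕ` index (`0` if out of range). -/
def dphat {n : ℕ} (δ : Fin n → ℝ → (Fin (2 * n) → ℝ)) (q : ℕ) (t : ℝ) : Fin (2 * n) → ℝ :=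
  if h : q < n then deriv (δ ⟨q, h⟩) t else 0

/-- `λ_j(t,u) = det(γ'(t) + Σ_i u_iδ_i'(t), δ_1(t), …, δ_n(t),
δ_1'(t), …, δ_{j-1}'(t), δ_{j+1}'(t), …, δ_n'(t))` (here `j : Fin n` is `0`-indexed,
correspondig to the paper's `λ_{j+1}`); the entries of the matrix are listed as columns. -/
def lamRuled {n : ℕ} (γ : ℝ → (Fin (2 * n) → ℝ)) (δ : Fin n → ℝ → (Fin (2 * n) → ℝ))
    (j : Fin n) : ℝ × (Fin n → ℝ) → ℝ := fun p =>
  Matrix.det (Matrix.of fun (row col : Fin (2 * n)) =>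
    if col.val = 0 then (deriv γ p.1 + ∑ i, p.2 i • deriv (δ i) p.1) row
    else if col.val < n + 1 then dhat δ (col.val - 1) p.1 row
    else dphat δ
      (if col.val - (n + 1) < j.val then col.val - (n + 1) else col.val - (n + 1) + 1)
      p.1 row)

/-- `Δ(t) = det(δ_1(t), …, δ_n(t), δ_1'(t), …, δ_n'(t))` (columns). -/
def bigDelta {n : ℕ} (δ : Fin n → ℝ → (Fin (2 * n) → ℝ)) (t : ℝ) : ℝ :=
  Matrix.det (Matrix.of fun (row col : Fin (2 * n)) =>
    if col.val < n then dhat δ col.val t row else dphat δ (col.val - n) t row)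

/-!
The Gram matrix of the linearly independent vectors `δ_i'(t)` is positive definite, hence
invertible. By Cramer's rule the entries of `G⁻¹` are rational in those of `G`, so `u` is
differentiable and `σ' = γ' + Σ_p (u_p δ_p' + u_p' δ_p)`. Dotting with `δ_i'`, the terms
`u_p' (δ_p · δ_i')` vanish because `δ_p ⊥ δ_i'`, and `γ' · δ_i' + (G u)_i = 0` by the choice
of `u`.
-/

lemma dp_eq_dotProduct {N : ℕ} (v w : Fin N → ℝ) : dp v w = v ⬝ᵥ w := rfl

lemma isUnit_dotProduct_gram_of_linearIndependent {ι : Type*} [Fintype ι] [DecidableEq ι]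
    {N : ℕ} {v : ι → Fin N → ℝ} (hv : LinearIndependent ℝ v) :
    IsUnit (Matrix.of fun i j => v i ⬝ᵥ v j) := by
  have hgram : (Matrix.of fun i j => v i ⬝ᵥ v j) =
      Matrix.gram ℝ (fun i => WithLp.toLp 2 (v i) : ι → EuclideanSpace ℝ (Fin N)) := by
    ext i j
    simp [Matrix.gram, EuclideanSpace.inner_eq_star_dotProduct, dotProduct_comm]
  rw [hgram]
  exact (Matrix.posDef_gram_of_linearIndependent
    (hv.map' (WithLp.linearEquiv 2 ℝ (Fin N → ℝ)).symm.toLinearMap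
      (LinearEquiv.ker _))).isUnit

lemma add_sum_smul_dotProduct_eq_zero {R ι m : Type*} [CommRing R] [Fintype ι] [Fintype m]
    {g : m → R} {d d' : ι → m → R} {u u' : ι → R} (hperp : ∀ p i, d p ⬝ᵥ d' i = 0)
    (hu : (Matrix.of fun i j => d' i ⬝ᵥ d' j) *ᵥ u = -fun i => g ⬝ᵥ d' i) (i : ι) :
    (g + ∑ p, (u p • d' p + u' p • d p)) ⬝ᵥ d' i = 0 := by
  have hui : ∑ p, (d' i ⬝ᵥ d' p) * u p = -(g ⬝ᵥ d' i) := congrFun hu i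
  simp only [add_dotProduct, sum_dotProduct, smul_dotProduct, smul_eq_mul, hperp, mul_zero,
    add_zero, dotProduct_comm (d' _) (d' i), mul_comm (u _), hui, add_neg_cancel]

section MatrixDifferentiable

variable {m : Type*} [Fintype m] [DecidableEq m] {M : ℝ → Matrix m m ℝ} {t : ℝ}

lemma differentiableAt_matrix_det (hM : ∀ i j, DifferentiableAt ℝ (fun s => M s i j) t) :
    DifferentiableAt ℝ (fun s => (M s).det) t := by
  simp only [Matrix.det_apply']
  exact DifferentiableAt.fun_sum fun σ _ =>
    (DifferentiableAt.fun_finsetProd fun i _ => hM (σ i) i).const_mul _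

lemma differentiableAt_matrix_adjugate_apply
    (hM : ∀ i j, DifferentiableAt ℝ (fun s => M s i j) t) (i j : m) :
    DifferentiableAt ℝ (fun s => (M s).adjugate i j) t := by
  simp only [Matrix.adjugate_apply]
  refine differentiableAt_matrix_det fun a b => ?_
  simp only [Matrix.updateRow_apply]
  split_ifs
  · exact differentiableAt_const _
  · exact hM a b

lemma differentiableAt_matrix_inv_apply (hM : ∀ i j, DifferentiableAt ℝ (fun s => M s i j) t)
    (hMt : IsUnit (M t)) (i j : m) : DifferentiableAt ℝ (fun s => (M s)⁻¹ i j) t := by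
  simp only [Matrix.inv_def, Ring.inverse_eq_inv', Matrix.smul_apply, smul_eq_mul]
  have hdet : (M t).det ≠ 0 := ((Matrix.isUnit_iff_isUnit_det _).1 hMt).ne_zero
  exact ((differentiableAt_matrix_det hM).inv hdet).mul
    (differentiableAt_matrix_adjugate_apply hM i j)

end MatrixDifferentiable

lemma ContDiffOn.differentiableAt_deriv {F : Type*} [NormedAddCommGroup F] [NormedSpace ℝ F]
    {f : ℝ → F} {s : Set ℝ} {k : WithTop ℕ∞} {t : ℝ} (hf : ContDiffOn ℝ k f s) (hs : IsOpen s)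
    (hk : 2 ≤ k) (ht : t ∈ s) : DifferentiableAt ℝ (deriv f) t :=
  ((hf.deriv_of_isOpen hs (m := 1) (by simpa [one_add_one_eq_two] using hk)).differentiableOn
    one_ne_zero t ht).differentiableAt (hs.mem_nhds ht)

section Striction

variable {n : ℕ} {γ : ℝ → (Fin (2 * n) → ℝ)} {δ : Fin n → ℝ → (Fin (2 * n) → ℝ)} {t : ℝ}

lemma isUnit_gram
    (hlin : LinearIndependent ℝ (Sum.elim (fun i => δ i t) (fun i => deriv (δ i) t))) :
    IsUnit (gram δ t) :=
  isUnit_dotProduct_gram_of_linearIndependent (hlin.comp Sum.inr Sum.inr_injective)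

lemma gram_mulVec_strictU (hG : IsUnit (gram δ t)) :
    gram δ t *ᵥ strictU γ δ t = -fun i => dp (deriv γ t) (deriv (δ i) t) := by
  rw [strictU, Matrix.mulVec_neg, Matrix.mulVec_mulVec,
    Matrix.mul_nonsing_inv _ ((Matrix.isUnit_iff_isUnit_det _).1 hG), Matrix.one_mulVec]

lemma differentiableAt_strictU (hγ : DifferentiableAt ℝ (deriv γ) t)
    (hδ : ∀ i, DifferentiableAt ℝ (deriv (δ i)) t) (hG : IsUnit (gram δ t)) (i : Fin n) :
    DifferentiableAt ℝ (fun s => strictU γ δ s i) t := by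
  have hdp : ∀ {v w : ℝ → Fin (2 * n) → ℝ}, DifferentiableAt ℝ v t → DifferentiableAt ℝ w t →
      DifferentiableAt ℝ (fun s => dp (v s) (w s)) t := fun hv hw =>
    DifferentiableAt.fun_sum fun k _ =>
      (differentiableAt_pi.1 hv k).mul (differentiableAt_pi.1 hw k)
  simp only [strictU, Pi.neg_apply, Matrix.mulVec, dotProduct]
  have hG' : ∀ p q, DifferentiableAt ℝ (fun s => gram δ s p q) t := fun p q => hdp (hδ p) (hδ q)
  exact (DifferentiableAt.fun_sum fun j _ =>
    (differentiableAt_matrix_inv_apply hG' hG i j).mul (hdp hγ (hδ j))).neg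

lemma hasDerivAt_strictCurve (hγ : DifferentiableAt ℝ γ t)
    (hδ : ∀ i, DifferentiableAt ℝ (δ i) t)
    (hu : ∀ i, DifferentiableAt ℝ (fun s => strictU γ δ s i) t) :
    HasDerivAt (strictCurve γ δ) (deriv γ t + ∑ i, (strictU γ δ t i • deriv (δ i) t +
      deriv (fun s => strictU γ δ s i) t • δ i t)) t :=
  hγ.hasDerivAt.add (HasDerivAt.fun_sum fun i _ => (hu i).hasDerivAt.smul (hδ i).hasDerivAt)

end Striction

theorem stmt10_general {n : ℕ} (J : Set ℝ) (hJ : IsOpen J)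
    (γ : ℝ → (Fin (2 * n) → ℝ)) (δ : Fin n → ℝ → (Fin (2 * n) → ℝ))
    (hγ : ContDiffOn ℝ (⊤ : ℕ∞) γ J) (hδ : ∀ i, ContDiffOn ℝ (⊤ : ℕ∞) (δ i) J)
    (hperp : ∀ t ∈ J, ∀ i j, dp (δ i t) (deriv (δ j) t) = 0)
    (hlin : ∀ t ∈ J,
      LinearIndependent ℝ (Sum.elim (fun i => δ i t) (fun i => deriv (δ i) t))) :
    (∀ t ∈ J, IsUnit (gram δ t)) ∧
      (∀ t ∈ J, ∀ i : Fin n, dp (deriv (strictCurve γ δ) t) (deriv (δ i) t) = 0) := by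
  refine ⟨fun t ht => isUnit_gram (hlin t ht), fun t ht i => ?_⟩
  have hsmooth : (2 : WithTop ℕ∞) ≤ (⊤ : ℕ∞) := WithTop.coe_le_coe.2 le_top
  have hG := isUnit_gram (hlin t ht)
  have hJt : J ∈ 𝓝 t := hJ.mem_nhds ht
  have hu := differentiableAt_strictU (γ := γ) (hγ.differentiableAt_deriv hJ hsmooth ht)
    (fun p => (hδ p).differentiableAt_deriv hJ hsmooth ht) hG
  rw [dp_eq_dotProduct, (hasDerivAt_strictCurve
    ((hγ.differentiableOn (by simp)).differentiableAt hJt)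
    (fun p => ((hδ p).differentiableOn (by simp)).differentiableAt hJt) hu).deriv]
  exact add_sum_smul_dotProduct_eq_zero (hperp t ht) (gram_mulVec_strictU hG) i

/-- Under the assumptions, the Gram matrix `G(t) = (δ_i'·δ_j')` is
invertible for every `t ∈ J`, and the curve
`σ(t) = γ(t) + Σ u_i(t)δ_i(t)` with `u(t) = -G(t)⁻¹(γ'·δ_1', …, γ'·δ_n')` is a
striction curve: `σ'(t)·δ_i'(t) = 0` for all `t ∈ J` and all `i`. -/
theorem stmt10 {n : ℕ} (hn : 0 < n) (J : Set ℝ) (hJ : IsOpen J)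
    (γ : ℝ → (Fin (2 * n) → ℝ)) (δ : Fin n → ℝ → (Fin (2 * n) → ℝ))
    (hγ : ContDiffOn ℝ (⊤ : ℕ∞) γ J) (hδ : ∀ i, ContDiffOn ℝ (⊤ : ℕ∞) (δ i) J)
    (horth : ∀ t ∈ J, ∀ i j, dp (δ i t) (δ j t) = if i = j then 1 else 0)
    (hperp : ∀ t ∈ J, ∀ i j, dp (δ i t) (deriv (δ j) t) = 0)
    (hlin : ∀ t ∈ J,
      LinearIndependent ℝ (Sum.elim (fun i => δ i t) (fun i => deriv (δ i) t))) :
    (∀ t ∈ J, IsUnit (gram δ t)) ∧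
      (∀ t ∈ J, ∀ i : Fin n, dp (deriv (strictCurve γ δ) t) (deriv (δ i) t) = 0) :=
  stmt10_general J hJ γ δ hγ hδ hperp hlin
end
end

section
/- Assume δ_i·δ_j' ≡ 0 for all i,j, the 2n vectors δ_1(t),…,δ_n(t),δ_1'(t),…,δ_n'(t) are linearly independent for each t, and γ is a striction curve (γ'·δ_i' ≡ 0 for all i). Then the set of singular points of F_{(γ,δ)} (the points (t,u) where the differential of F_{(γ,δ)} has rank < n+1) is exactly J × {0}, i.e. the points with u_1 = ⋯ = u_n = 0. -/
open Filter Topology Matrix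

noncomputable section

/-! The differential of `F` at `(t, u)` is `(s, w) ↦ s • v + ∑ wᵢ • δᵢ` with
`v = γ' + ∑ uᵢ • δᵢ'`; since the `δᵢ` are independent it has rank `< n + 1` exactly when
`v ∈ span δ`. As `δ ⊥ δ'` and `γ' ⊥ δ'`, membership forces `∑ uᵢ • δᵢ' ∈ span δ'` to be orthogonal
to `span δ'`, hence zero, so `u = 0`. Conversely `ℝ^{2n} = span δ ⊔ span δ'`, and the
`span δ'`-component of `γ'` is orthogonal to `span δ'`, so `γ' ∈ span δ`. -/

open Set Submodule

section DotProduct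

variable {R m ι : Type*} [Fintype m]

theorem dotProduct_eq_zero_of_mem_span [CommSemiring R] {s : Set (m → R)} {x w : m → R}
    (hx : x ∈ span R s) (h : ∀ y ∈ s, y ⬝ᵥ w = 0) : x ⬝ᵥ w = 0 := by
  induction hx using Submodule.span_induction with
  | mem y hy => exact h y hy
  | zero => exact zero_dotProduct w
  | add y z _ _ hy hz => rw [add_dotProduct, hy, hz, add_zero]
  | smul c y _ hy => rw [smul_dotProduct, hy, smul_zero]

theorem eq_zero_of_mem_span_of_dotProduct_eq_zero [CommRing R] [LinearOrder R]
    [IsStrictOrderedRing R] {s : Set (m → R)} {x : m → R}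
    (hx : x ∈ span R s) (h : ∀ y ∈ s, y ⬝ᵥ x = 0) : x = 0 :=
  dotProduct_self_eq_zero.1 (dotProduct_eq_zero_of_mem_span hx h)

theorem mem_span_of_forall_dotProduct_eq_zero [CommRing R] [LinearOrder R]
    [IsStrictOrderedRing R] {d d' : ι → m → R}
    (htop : span R (range d) ⊔ span R (range d') = ⊤) (hperp : ∀ i j, d i ⬝ᵥ d' j = 0)
    {g : m → R} (hg : ∀ j, g ⬝ᵥ d' j = 0) : g ∈ span R (range d) := by
  obtain ⟨a, ha, b, hb, rfl⟩ := mem_sup.1 (htop.ge (Submodule.mem_top (x := g)))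
  have ha' : ∀ j, a ⬝ᵥ d' j = 0 := fun j =>
    dotProduct_eq_zero_of_mem_span ha (forall_mem_range.2 fun i => hperp i j)
  have hb0 : b = 0 := eq_zero_of_mem_span_of_dotProduct_eq_zero hb <| forall_mem_range.2 fun j => by
    simpa [dotProduct_comm, add_dotProduct, ha'] using hg j
  simpa [hb0] using ha

theorem add_sum_smul_mem_span_iff [CommRing R] [LinearOrder R] [IsStrictOrderedRing R]
    [Fintype ι] {d d' : ι → m → R} (hd' : LinearIndependent R d')
    (htop : span R (range d) ⊔ span R (range d') = ⊤) (hperp : ∀ i j, d i ⬝ᵥ d' j = 0)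
    {g : m → R} (hg : ∀ j, g ⬝ᵥ d' j = 0) (u : ι → R) :
    g + ∑ i, u i • d' i ∈ span R (range d) ↔ u = 0 := by
  refine ⟨fun hmem => ?_, ?_⟩
  · have hw : ∀ j, (∑ i, u i • d' i) ⬝ᵥ d' j = 0 := fun j => by
      simpa [add_dotProduct, hg] using
        dotProduct_eq_zero_of_mem_span hmem (forall_mem_range.2 fun i => hperp i j)
    have hw0 : ∑ i, u i • d' i = 0 :=
      eq_zero_of_mem_span_of_dotProduct_eq_zero
        (sum_mem fun i _ => smul_mem _ _ (subset_span (mem_range_self i)))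
        (forall_mem_range.2 fun j => by rw [dotProduct_comm, hw j])
    exact funext (Fintype.linearIndependent_iff.1 hd' u hw0)
  · rintro rfl
    simpa using mem_span_of_forall_dotProduct_eq_zero htop hperp hg

end DotProduct

theorem finrank_span_range_finCons_lt_iff {K V : Type*} [DivisionRing K] [AddCommGroup V]
    [Module K V] {n : ℕ} {v : V} {b : Fin n → V} (hb : LinearIndependent K b) :
    Module.finrank K (span K (range (Fin.cons v b : Fin (n + 1) → V))) < n + 1 ↔
      v ∈ span K (range b) := by
  have hli :=
    linearIndependent_iff_card_eq_finrank_span (R := K) (b := (Fin.cons v b : Fin (n + 1) → V))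
  have hle := finrank_range_le_card (R := K) (Fin.cons v b : Fin (n + 1) → V)
  rw [linearIndependent_finCons, and_iff_right hb, Fintype.card_fin] at hli
  rw [Fintype.card_fin] at hle
  unfold Set.finrank at hli hle
  rw [← not_iff_not, hli]
  omega

theorem finrank_range_lt_iff_mem_span {K V : Type*} [DivisionRing K] [AddCommGroup V] [Module K V]
    {n : ℕ} {v : V} {b : Fin n → V} (hb : LinearIndependent K b) (M : K × (Fin n → K) →ₗ[K] V)
    (hM : ∀ s w, M (s, w) = s • v + ∑ i, w i • b i) :
    Module.finrank K (LinearMap.range M) < n + 1 ↔ v ∈ span K (range b) := by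
  have hM' : M = Fintype.linearCombination K (Fin.cons v b : Fin (n + 1) → V) ∘ₗ
      (Fin.consLinearEquiv K fun _ => K).toLinearMap :=
    LinearMap.ext fun p => by simp [hM, Fintype.linearCombination_apply, Fin.sum_univ_succ]
  rw [hM', LinearMap.range_comp_of_range_eq_top _ (LinearEquiv.range _),
    Fintype.range_linearCombination]
  exact finrank_span_range_finCons_lt_iff hb

theorem hasFDerivAt_ruled {n : ℕ} {γ : ℝ → Fin (2 * n) → ℝ} {δ : Fin n → ℝ → Fin (2 * n) → ℝ}
    {γ' : Fin (2 * n) → ℝ} {δ' : Fin n → Fin (2 * n) → ℝ} {t : ℝ} (u : Fin n → ℝ)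
    (hγ : HasDerivAt γ γ' t) (hδ : ∀ i, HasDerivAt (δ i) (δ' i) t) :
    HasFDerivAt (ruled γ δ)
      ((ContinuousLinearMap.fst ℝ ℝ (Fin n → ℝ)).smulRight (γ' + ∑ i, u i • δ' i) +
        ∑ i, ((ContinuousLinearMap.proj i).comp
          (ContinuousLinearMap.snd ℝ ℝ (Fin n → ℝ))).smulRight (δ i t)) (t, u) := by
  have hterm : ∀ i, HasFDerivAt (fun p : ℝ × (Fin n → ℝ) => p.2 i • δ i p.1)
      (u i • (ContinuousLinearMap.fst ℝ ℝ (Fin n → ℝ)).smulRight (δ' i) +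
        ((ContinuousLinearMap.proj i).comp
          (ContinuousLinearMap.snd ℝ ℝ (Fin n → ℝ))).smulRight (δ i t)) (t, u) := fun i => by
    have hcoord : HasFDerivAt (fun p : ℝ × (Fin n → ℝ) => p.2 i)
        ((ContinuousLinearMap.proj i).comp (ContinuousLinearMap.snd ℝ ℝ (Fin n → ℝ))) (t, u) :=
      ((ContinuousLinearMap.proj i).comp (ContinuousLinearMap.snd ℝ ℝ (Fin n → ℝ))).hasFDerivAt
    exact (hcoord.smul ((hδ i).hasFDerivAt.comp (t, u) hasFDerivAt_fst)).congr_fderiv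
      (by ext <;> simp)
  refine ((hγ.hasFDerivAt.comp (t, u) hasFDerivAt_fst).add
    (HasFDerivAt.fun_sum fun i _ => hterm i)).congr_fderiv ?_
  ext <;> simp [Finset.sum_add_distrib, Finset.smul_sum, smul_smul]

theorem stmt11_general {n : ℕ} (J : Set ℝ) (hJ : IsOpen J)
    (γ : ℝ → (Fin (2 * n) → ℝ)) (δ : Fin n → ℝ → (Fin (2 * n) → ℝ))
    (hγ : ContDiffOn ℝ (⊤ : ℕ∞) γ J) (hδ : ∀ i, ContDiffOn ℝ (⊤ : ℕ∞) (δ i) J)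
    (hperp : ∀ t ∈ J, ∀ i j, dp (δ i t) (deriv (δ j) t) = 0)
    (hlin : ∀ t ∈ J,
      LinearIndependent ℝ (Sum.elim (fun i => δ i t) (fun i => deriv (δ i) t)))
    (hstr : ∀ t ∈ J, ∀ i, dp (deriv γ t) (deriv (δ i) t) = 0) :
    ∀ t ∈ J, ∀ u : Fin n → ℝ,
      (Module.finrank ℝ (LinearMap.range (fderiv ℝ (ruled γ δ) (t, u)).toLinearMap) < n + 1 ↔
        u = 0) := by
  intro t ht u
  have hγt : HasDerivAt γ (deriv γ t) t :=
    ((hγ.contDiffAt (hJ.mem_nhds ht)).differentiableAt (by simp)).hasDerivAt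
  have hδt : ∀ i, HasDerivAt (δ i) (deriv (δ i) t) t := fun i =>
    (((hδ i).contDiffAt (hJ.mem_nhds ht)).differentiableAt (by simp)).hasDerivAt
  have hδ_indep : LinearIndependent ℝ fun i => δ i t := (hlin t ht).comp _ Sum.inl_injective
  have hδ'_indep : LinearIndependent ℝ fun i => deriv (δ i) t :=
    (hlin t ht).comp _ Sum.inr_injective
  have hspan : span ℝ (range fun i => δ i t) ⊔ span ℝ (range fun i => deriv (δ i) t) = ⊤ := by
    rw [← span_union, ← Sum.elim_range]
    exact (hlin t ht).span_eq_top_of_card_eq_finrank' (by simp [two_mul])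
  rw [(hasFDerivAt_ruled u hγt hδt).fderiv,
    finrank_range_lt_iff_mem_span (v := deriv γ t + ∑ i, u i • deriv (δ i) t) hδ_indep _
      fun s w => by simp]
  -- `dp` is definitionally `dotProduct`
  exact add_sum_smul_mem_span_iff hδ'_indep hspan (hperp t ht) (hstr t ht) u

/-- If `γ` is a striction curve, then the singular set of `F_{(γ,δ)}`
(the points where the differential has rank `< n+1`) is exactly `J × {0}`. -/
theorem stmt11 {n : ℕ} (hn : 0 < n) (J : Set ℝ) (hJ : IsOpen J)
    (γ : ℝ → (Fin (2 * n) → ℝ)) (δ : Fin n → ℝ → (Fin (2 * n) → ℝ))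
    (hγ : ContDiffOn ℝ (⊤ : ℕ∞) γ J) (hδ : ∀ i, ContDiffOn ℝ (⊤ : ℕ∞) (δ i) J)
    (horth : ∀ t ∈ J, ∀ i j, dp (δ i t) (δ j t) = if i = j then 1 else 0)
    (hperp : ∀ t ∈ J, ∀ i j, dp (δ i t) (deriv (δ j) t) = 0)
    (hlin : ∀ t ∈ J,
      LinearIndependent ℝ (Sum.elim (fun i => δ i t) (fun i => deriv (δ i) t)))
    (hstr : ∀ t ∈ J, ∀ i, dp (deriv γ t) (deriv (δ i) t) = 0) :
    ∀ t ∈ J, ∀ u : Fin n → ℝ,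
      (Module.finrank ℝ (LinearMap.range (fderiv ℝ (ruled γ δ) (t, u)).toLinearMap) < n + 1 ↔
        u = 0) :=
  stmt11_general J hJ γ δ hγ hδ hperp hlin hstr
end
end

section
/- Assume δ_i·δ_j' ≡ 0 for all i,j, the vectors δ_1(t),…,δ_n(t),δ_1'(t),…,δ_n'(t) are linearly independent for each t, and γ is a striction curve, so that γ'(t) = Σ_{i=1}^n α_i(t)δ_i(t) for smooth functions α_i. For j = 1,…,n define λ_j(t,u) = det(γ'(t)+Σ_{i=1}^n u_iδ_i'(t), δ_1(t),…,δ_n(t), δ_1'(t),…,δ_{j−1}'(t),δ_{j+1}'(t),…,δ_n'(t)) (a determinant of 2n column vectors in ℝ^{2n}), set Δ(t) = det(δ_1(t),…,δ_n(t),δ_1'(t),…,δ_n'(t)), and let η be the vector field η = −∂_t + Σ_{i=1}^n α_i(t)∂_{u_i}. Then at every point p = (t,0,…,0) one has ηλ_j(p) = (−1)^{n+j−1}·α_j(t)·Δ(t). -/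
/-
Along `γ' = Σ αᵢδᵢ` the function `λ_j` is linear in `u` with a single surviving term: in the
first column `γ'(t) + Σ uᵢδᵢ'(t)` of the determinant, every `δᵢ` and every `δᵢ'` with `i ≠ j` is
repeated among the other columns, so `λ_j(t, u) = u_j · S_j(t)`, where `S_j` is the determinant
with `δ_j'` in the first column. Hence `ηλ_j(t, 0) = α_j(t) S_j(t)`, and moving `δ_j'` from the
front to its place in `Δ` is a cycle of length `n + j`, so `S_j = (-1)^(n+j) Δ`.
-/

open Filter Topology Matrix

noncomputable section

open Function

namespace AlternatingMap

variable {R M N ι κ : Type*} [CommSemiring R] [AddCommMonoid M] [Module R M] [AddCommMonoid N]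
  [Module R N] [DecidableEq ι] [Fintype κ] (f : M [⋀^ι]→ₗ[R] N) (v : ι → M) (i : ι)
  (a : κ → R) (w : κ → M)

theorem map_update_sum_smul_eq_zero (hw : ∀ l, ∃ k ≠ i, v k = w l) :
    f (update v i (∑ l, a l • w l)) = 0 := by
  rw [f.map_update_sum]
  refine Finset.sum_eq_zero fun l _ => ?_
  obtain ⟨k, hki, hk⟩ := hw l
  rw [f.map_update_smul, ← hk, f.map_update_self v hki.symm, smul_zero]

theorem map_update_sum_smul_eq_single (l₀ : κ) (h₀ : w l₀ = v i)
    (hw : ∀ l ≠ l₀, ∃ k ≠ i, v k = w l) :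
    f (update v i (∑ l, a l • w l)) = a l₀ • f v := by
  rw [f.map_update_sum, Finset.sum_eq_single l₀ (fun l _ hl => ?_) (by simp),
    f.map_update_smul, h₀, update_eq_self]
  obtain ⟨k, hki, hk⟩ := hw l hl
  rw [f.map_update_smul, ← hk, f.map_update_self v hki.symm, smul_zero]

end AlternatingMap

theorem Matrix.differentiableAt_det {𝕜 E ι : Type*} [NontriviallyNormedField 𝕜]
    [NormedAddCommGroup E] [NormedSpace 𝕜 E] [Fintype ι] [DecidableEq ι]
    {A : E → Matrix ι ι 𝕜} {x : E} (hA : ∀ i j, DifferentiableAt 𝕜 (fun y => A y i j) x) :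
    DifferentiableAt 𝕜 (fun y => (A y).det) x := by
  simp_rw [Matrix.det_apply]
  fun_prop

theorem fderiv_apply_mul_comp_fst {ι : Type*} [Fintype ι] (j : ι) {S : ℝ → ℝ} {t : ℝ}
    (hS : DifferentiableAt ℝ S t) (h : ℝ) (v : ι → ℝ) :
    fderiv ℝ (fun p : ℝ × (ι → ℝ) => p.2 j * S p.1) (t, 0) (h, v) = v j * S t := by
  have hj : HasFDerivAt (fun p : ℝ × (ι → ℝ) => p.2 j)
      ((ContinuousLinearMap.proj j).comp (ContinuousLinearMap.snd ℝ ℝ (ι → ℝ))) (t, 0) :=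
    ((ContinuousLinearMap.proj j).comp (ContinuousLinearMap.snd ℝ ℝ (ι → ℝ))).hasFDerivAt
  have hS' : HasFDerivAt (fun p : ℝ × (ι → ℝ) => S p.1)
      ((fderiv ℝ S t).comp (ContinuousLinearMap.fst ℝ ℝ (ι → ℝ))) (t, 0) :=
    hS.hasFDerivAt.comp _ hasFDerivAt_fst
  rw [(hj.fun_mul hS').fderiv]
  simp [mul_comm]

section RuledDeterminants

variable {n : ℕ}

/-- The columns of `λ_j` (as rows of a matrix), with `δ_j'` in place of the first column
`γ' + Σ uᵢδᵢ'`. -/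
def lamCols (δ : Fin n → ℝ → (Fin (2 * n) → ℝ)) (j : Fin n) (s : ℝ) :
    Fin (2 * n) → Fin (2 * n) → ℝ := fun c =>
  if c.val = 0 then deriv (δ j) s
  else if c.val < n + 1 then dhat δ (c.val - 1) s
  else dphat δ
    (if c.val - (n + 1) < j.val then c.val - (n + 1) else c.val - (n + 1) + 1) s

theorem differentiableAt_det_lamCols {δ : Fin n → ℝ → (Fin (2 * n) → ℝ)} {t : ℝ}
    (hδ : ∀ i, DifferentiableAt ℝ (δ i) t) (hδ' : ∀ i, DifferentiableAt ℝ (deriv (δ i)) t)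
    (j : Fin n) : DifferentiableAt ℝ (fun s => (Matrix.of (lamCols δ j s)).det) t := by
  have hcol : ∀ c, DifferentiableAt ℝ (fun s => lamCols δ j s c) t := by
    intro c
    simp only [lamCols, dhat, dphat]
    split_ifs <;> simp [*]
  exact Matrix.differentiableAt_det fun c r => differentiableAt_pi.1 (hcol c) r

variable (δ : Fin n → ℝ → (Fin (2 * n) → ℝ)) (j : Fin n) (s : ℝ)

theorem lamRuled_eq_det_update (γ : ℝ → (Fin (2 * n) → ℝ)) (u : Fin n → ℝ) :
    lamRuled γ δ j (s, u) = (Matrix.of (update (lamCols δ j s) ⟨0, by have := j.pos; omega⟩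
      (deriv γ s + ∑ i, u i • deriv (δ i) s))).det := by
  rw [lamRuled, ← det_transpose]
  congr 1
  ext c r
  by_cases hc : c.val = 0
  · rw [show c = ⟨0, by have := j.pos; omega⟩ from Fin.ext hc]
    simp
  · rw [transpose_apply, of_apply, of_apply, update_of_ne (fun h => hc (by rw [h])), lamCols,
      if_neg hc, if_neg hc]
    split_ifs <;> rfl

theorem lamCols_succ (i : Fin n) :
    lamCols δ j s ⟨i.val + 1, by omega⟩ = δ i s := by
  simp [lamCols, dhat]

theorem exists_lamCols_eq_deriv_of_ne {i : Fin n} (hij : i ≠ j) :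
    ∃ c : Fin (2 * n), c.val ≠ 0 ∧ lamCols δ j s c = deriv (δ i) s := by
  have hij : i.val ≠ j.val := Fin.val_ne_of_ne hij
  have hj := j.isLt
  rcases lt_or_gt_of_ne hij with h | h
  · refine ⟨⟨n + 1 + i.val, by omega⟩, by simp, ?_⟩
    have h1 : ¬ n + 1 + i.val < n + 1 := by omega
    simp [lamCols, dphat, h, h1]
  · refine ⟨⟨n + i.val, by omega⟩, by simp; omega, ?_⟩
    have h1 : ¬ n + i.val < n + 1 := by omega
    have h2 : ¬ n + i.val - (n + 1) < j.val := by omega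
    have h3 : n + i.val - (n + 1) + 1 = i.val := by omega
    simp [lamCols, dphat, h1, h2, h3, show n ≠ 0 by omega]

theorem lamRuled_eq_mul_det_lamCols (γ : ℝ → (Fin (2 * n) → ℝ)) (a : Fin n → ℝ)
    (hγ : deriv γ s = ∑ i, a i • δ i s) (u : Fin n → ℝ) :
    lamRuled γ δ j (s, u) = u j * (Matrix.of (lamCols δ j s)).det := by
  rw [lamRuled_eq_det_update, hγ]
  change detRowAlternating (update (lamCols δ j s) _ (_ + _)) =
    u j * detRowAlternating (lamCols δ j s)
  rw [AlternatingMap.map_update_add,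
    AlternatingMap.map_update_sum_smul_eq_zero _ _ _ _ _
      fun i => ⟨_, by simp [Fin.ext_iff], lamCols_succ δ j s i⟩,
    AlternatingMap.map_update_sum_smul_eq_single _ _ _ _ _ j (by simp [lamCols])
      fun i hij => ?_, zero_add, smul_eq_mul]
  obtain ⟨c, hc, hcol⟩ := exists_lamCols_eq_deriv_of_ne δ j s hij
  exact ⟨c, fun h => hc (by rw [h]), hcol⟩

theorem bigDelta_eq_neg_one_pow_mul_det_lamCols :
    bigDelta δ s = (-1) ^ (n + j.val) * (Matrix.of (lamCols δ j s)).det := by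
  let k : Fin (2 * n) := ⟨n + j.val, by omega⟩
  have hperm : (Matrix.of fun r c : Fin (2 * n) =>
        if c.val < n then dhat δ c.val s r else dphat δ (c.val - n) s r)ᵀ =
      (Matrix.of (lamCols δ j s)).submatrix (Fin.cycleRange k) id := by
    ext c r
    simp only [transpose_apply, of_apply, submatrix_apply, id]
    rcases lt_trichotomy c k with hck | rfl | hck
    · have hval := Fin.coe_cycleRange_of_lt hck
      have hck : c.val < n + j.val := hck
      by_cases hcn : c.val < n
      · simp [lamCols, hval, hcn]
      · simp [lamCols, hval, hcn, show c.val - n < j.val by omega,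
          show c.val + 1 - (n + 1) = c.val - n by omega]
    · simp [lamCols, Fin.coe_cycleRange_of_le le_rfl, dphat, k]
    · have hck' : n + j.val < c.val := hck
      simp [lamCols, Fin.cycleRange_of_gt hck, show ¬ c.val < n by omega,
        show c.val ≠ 0 by omega, show ¬ c.val < n + 1 by omega,
        show ¬ c.val - (n + 1) < j.val by omega, show c.val - (n + 1) + 1 = c.val - n by omega]
  rw [bigDelta, ← det_transpose, hperm, det_permute, Fin.sign_cycleRange]
  push_cast
  rfl

end RuledDeterminants

theorem stmt13_general {n : ℕ} (J : Set ℝ) (hJ : IsOpen J)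
    (γ : ℝ → (Fin (2 * n) → ℝ)) (δ : Fin n → ℝ → (Fin (2 * n) → ℝ))
    (hδ : ∀ i, ContDiffOn ℝ (⊤ : ℕ∞) (δ i) J)
    (α : Fin n → ℝ → ℝ)
    (hα : ∀ t ∈ J, deriv γ t = ∑ i, α i t • δ i t) :
    ∀ t ∈ J, ∀ j : Fin n,
      fderiv ℝ (lamRuled γ δ j) (t, (0 : Fin n → ℝ)) ((-1 : ℝ), fun i => α i t)
        = (-1 : ℝ) ^ (n + j.val) * (α j t * bigDelta δ t) := by
  intro t ht j
  have hfactor : lamRuled γ δ j =ᶠ[𝓝 (t, 0)]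
      fun p => p.2 j * (Matrix.of (lamCols δ j p.1)).det := by
    filter_upwards [(hJ.preimage continuous_fst).mem_nhds ht] with p hp
    exact lamRuled_eq_mul_det_lamCols δ j p.1 γ (α · p.1) (hα p.1 hp) p.2
  have hJt := hJ.mem_nhds ht
  have hδt : ∀ i, DifferentiableAt ℝ (δ i) t := fun i =>
    ((hδ i).contDiffAt hJt).differentiableAt (by simp)
  have hδt' : ∀ i, DifferentiableAt ℝ (deriv (δ i)) t := fun i =>
    (((hδ i).deriv_of_isOpen hJ (m := 1) (WithTop.coe_le_coe.2 le_top)).contDiffAt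
      hJt).differentiableAt one_ne_zero
  rw [hfactor.fderiv_eq, fderiv_apply_mul_comp_fst j (differentiableAt_det_lamCols hδt hδt' j),
    bigDelta_eq_neg_one_pow_mul_det_lamCols δ j t]
  obtain hsign | hsign := neg_one_pow_eq_or ℝ (n + j.val) <;> rw [hsign] <;> ring

/-- With `γ' = Σ α_iδ_i` and `η = -∂_t + Σ α_i∂_{u_i}`, at every point
`p = (t,0,…,0)` one has `ηλ_j(p) = (-1)^{n+j-1} α_j(t) Δ(t)` (here `j : Fin n` is
`0`-indexed, so the sign is `(-1)^{n + j}`). -/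
theorem stmt13 {n : ℕ} (hn : 0 < n) (J : Set ℝ) (hJ : IsOpen J)
    (γ : ℝ → (Fin (2 * n) → ℝ)) (δ : Fin n → ℝ → (Fin (2 * n) → ℝ))
    (hγ : ContDiffOn ℝ (⊤ : ℕ∞) γ J) (hδ : ∀ i, ContDiffOn ℝ (⊤ : ℕ∞) (δ i) J)
    (horth : ∀ t ∈ J, ∀ i j, dp (δ i t) (δ j t) = if i = j then 1 else 0)
    (hperp : ∀ t ∈ J, ∀ i j, dp (δ i t) (deriv (δ j) t) = 0)
    (hlin : ∀ t ∈ J,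
      LinearIndependent ℝ (Sum.elim (fun i => δ i t) (fun i => deriv (δ i) t)))
    (α : Fin n → ℝ → ℝ) (hαs : ∀ i, ContDiffOn ℝ (⊤ : ℕ∞) (α i) J)
    (hα : ∀ t ∈ J, deriv γ t = ∑ i, α i t • δ i t) :
    ∀ t ∈ J, ∀ j : Fin n,
      fderiv ℝ (lamRuled γ δ j) (t, (0 : Fin n → ℝ)) ((-1 : ℝ), fun i => α i t)
        = (-1 : ℝ) ^ (n + j.val) * (α j t * bigDelta δ t) :=
  stmt13_general J hJ γ δ hδ α hα
end
end

section
/- If f : (ℝ^m,0) → (ℝ^n,0) is an r-Morin singularity (A-equivalent to h_{0,r}), then there exist signs ε_1, ε_2 ∈ {±1} and orientation-preserving diffeomorphism-germs σ : (ℝ^m,0) → (ℝ^m,0) and τ : (ℝ^n,0) → (ℝ^n,0) such that τ∘f∘σ = h_{r,(ε_1,ε_2)} as germs at 0. -/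
open Filter Topology Matrix

noncomputable section

/-! The reflections `x₁ ↦ ε₁x₁` of the source and `y_n ↦ ε₂y_n` of the target conjugate
`h_{0,r}` into `h_{r,(ε₁,ε₂)}`: `x₁` enters `h_{0,r}` only through the components `x₁` and
`x₁x_m + ⋯`, and `y_n` is the component `h_{n-m+1}`. Composing the given source and target germs
with these reflections, for `ε₁, ε₂` the signs of their Jacobian determinants, makes both
orientation preserving. -/

def scaleCoord (k q : ℕ) (c : ℝ) : (Fin k → ℝ) →L[ℝ] (Fin k → ℝ) :=
  ContinuousLinearMap.pi fun i => (if i.val = q then c else 1) • ContinuousLinearMap.proj i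

@[simp]
lemma scaleCoord_apply (k q : ℕ) (c : ℝ) (x : Fin k → ℝ) (i : Fin k) :
    scaleCoord k q c x i = (if i.val = q then c else 1) * x i := by
  simp only [scaleCoord, ContinuousLinearMap.pi_apply]
  split_ifs <;> simp

lemma det_scaleCoord {k q : ℕ} (hq : q < k) (c : ℝ) :
    LinearMap.det (scaleCoord k q c : (Fin k → ℝ) →ₗ[ℝ] (Fin k → ℝ)) = c := by
  have hdiag : (scaleCoord k q c : (Fin k → ℝ) →ₗ[ℝ] (Fin k → ℝ))
      = Matrix.toLin' (Matrix.diagonal fun i : Fin k => if i = ⟨q, hq⟩ then c else 1) := by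
    ext x i
    simp [Matrix.mulVec_diagonal, Fin.ext_iff]
  rw [hdiag, LinearMap.det_toLin', Matrix.det_diagonal, Finset.prod_ite_eq']
  simp

lemma xhat_scaleCoord_self {m q : ℕ} (c : ℝ) (x : Fin m → ℝ) :
    xhat (scaleCoord m q c x) q = c * xhat x q := by
  unfold xhat
  split_ifs <;> simp_all

lemma xhat_scaleCoord_of_ne {m q p : ℕ} (c : ℝ) (x : Fin m → ℝ) (hp : p ≠ q) :
    xhat (scaleCoord m q c x) p = xhat x p := by
  unfold xhat
  split_ifs <;> simp_all

theorem scaleCoord_hMorinNF_scaleCoord {m n r : ℕ} (hm : 2 ≤ m) (hmn : m < n) (hr : 1 ≤ r)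
    (e1 e2 : ℝ) (x : Fin m → ℝ) :
    scaleCoord n (n - 1) e2 (hMorinNF m n r (scaleCoord m 0 e1 x)) = hSign m n r e1 e2 x := by
  have hlast : xhat (scaleCoord m 0 e1 x) (m - 1) = xhat x (m - 1) :=
    xhat_scaleCoord_of_ne e1 x (by omega)
  have hblock : ∀ i s, 1 ≤ i → ∑ j ∈ Finset.range s,
      xhat (scaleCoord m 0 e1 x) (i * r + j) * xhat x (m - 1) ^ (j + 1)
      = ∑ j ∈ Finset.range s, xhat x (i * r + j) * xhat x (m - 1) ^ (j + 1) := by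
    intro i s hi
    refine Finset.sum_congr rfl fun j _ => ?_
    rw [xhat_scaleCoord_of_ne e1 x (by nlinarith)]
  funext k
  simp only [scaleCoord_apply, hMorinNF, hSign, hlast]
  split_ifs <;> try (exfalso; omega)
  · rw [hblock (n - m) (r - 1) (by omega)]
  · rw [one_mul, (by omega : (k : ℕ) = 0), xhat_scaleCoord_self]
  · rw [one_mul, xhat_scaleCoord_of_ne e1 x (by omega)]
  · rw [one_mul, (by omega : (k : ℕ) - (m - 1) = 0), zero_mul, Finset.sum_range_eq_add_Ico _ hr]
    simp only [zero_add, pow_one, xhat_scaleCoord_self, mul_assoc]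
    refine congrArg _ (Finset.sum_congr rfl fun j hj => ?_)
    rw [xhat_scaleCoord_of_ne e1 x (by simp at hj; omega)]
  · rw [one_mul, hblock _ r (by omega)]

section OrientationByScaling

variable {k : ℕ} {σ : (Fin k → ℝ) → (Fin k → ℝ)}

lemma isOPDiffeoGerm_comp_clm (L : (Fin k → ℝ) →L[ℝ] (Fin k → ℝ)) (h0 : σ 0 = 0)
    (hσ : ContDiffAt ℝ (⊤ : ℕ∞) σ 0)
    (hdet : 0 < LinearMap.det (fderiv ℝ σ 0 : (Fin k → ℝ) →ₗ[ℝ] (Fin k → ℝ)) *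
      LinearMap.det (L : (Fin k → ℝ) →ₗ[ℝ] (Fin k → ℝ))) :
    IsOPDiffeoGerm (σ ∘ L) := by
  have hσL : ContDiffAt ℝ (⊤ : ℕ∞) σ (L 0) := by rwa [map_zero]
  refine ⟨by simp [h0], hσL.comp 0 L.contDiff.contDiffAt, ?_⟩
  rw [fderiv_comp 0 (hσL.differentiableAt (by simp)) L.differentiableAt, L.fderiv, map_zero,
    ContinuousLinearMap.toLinearMap_comp, LinearMap.det_comp]
  exact hdet

lemma isOPDiffeoGerm_clm_comp (L : (Fin k → ℝ) →L[ℝ] (Fin k → ℝ)) (h0 : σ 0 = 0)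
    (hσ : ContDiffAt ℝ (⊤ : ℕ∞) σ 0)
    (hdet : 0 < LinearMap.det (L : (Fin k → ℝ) →ₗ[ℝ] (Fin k → ℝ)) *
      LinearMap.det (fderiv ℝ σ 0 : (Fin k → ℝ) →ₗ[ℝ] (Fin k → ℝ))) :
    IsOPDiffeoGerm (L ∘ σ) := by
  refine ⟨by simp [h0], L.contDiff.contDiffAt.comp 0 hσ, ?_⟩
  rw [fderiv_comp 0 L.differentiableAt (hσ.differentiableAt (by simp)), L.fderiv,
    ContinuousLinearMap.toLinearMap_comp, LinearMap.det_comp]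
  exact hdet

lemma IsDiffeoGerm.exists_sign_isOPDiffeoGerm_comp_scaleCoord (hσ : IsDiffeoGerm σ) {q : ℕ}
    (hq : q < k) : ∃ e : ℝ, (e = 1 ∨ e = -1) ∧ IsOPDiffeoGerm (σ ∘ scaleCoord k q e) := by
  obtain ⟨h0, hσs, hdet⟩ := hσ
  refine ⟨Real.sign _, (Real.sign_apply_eq_of_ne_zero _ hdet).symm,
    isOPDiffeoGerm_comp_clm _ h0 hσs ?_⟩
  rw [det_scaleCoord hq, mul_comm]
  exact Real.sign_mul_pos_of_ne_zero _ hdet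

lemma IsDiffeoGerm.exists_sign_isOPDiffeoGerm_scaleCoord_comp (hσ : IsDiffeoGerm σ) {q : ℕ}
    (hq : q < k) : ∃ e : ℝ, (e = 1 ∨ e = -1) ∧ IsOPDiffeoGerm (scaleCoord k q e ∘ σ) := by
  obtain ⟨h0, hσs, hdet⟩ := hσ
  refine ⟨Real.sign _, (Real.sign_apply_eq_of_ne_zero _ hdet).symm,
    isOPDiffeoGerm_clm_comp _ h0 hσs ?_⟩
  rw [det_scaleCoord hq]
  exact Real.sign_mul_pos_of_ne_zero _ hdet

end OrientationByScaling

/-- Every `r`-Morin singularity `f` can be brought to one of the normal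
forms `h_{r,(ε₁,ε₂)}` by orientation-preserving diffeomorphism-germs on source and
target. -/
theorem stmt14 {m n r : ℕ} (hmn : m < n) (hr : 1 ≤ r) (hdim : r * (n - m + 1) ≤ m)
    (f : (Fin m → ℝ) → (Fin n → ℝ))
    (hf : AEquiv f (hMorinNF m n r)) :
    ∃ e1 e2 : ℝ, (e1 = 1 ∨ e1 = -1) ∧ (e2 = 1 ∨ e2 = -1) ∧
      ∃ (σ : (Fin m → ℝ) → (Fin m → ℝ)) (τ : (Fin n → ℝ) → (Fin n → ℝ)),
        IsOPDiffeoGerm σ ∧ IsOPDiffeoGerm τ ∧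
        ∀ᶠ x in 𝓝 (0 : Fin m → ℝ), τ (f (σ x)) = hSign m n r e1 e2 x := by
  obtain ⟨φ, Φ, hφ, hΦ, hfh⟩ := hf
  have hm : 2 ≤ m := by simpa using (Nat.mul_le_mul hr (by omega : 2 ≤ n - m + 1)).trans hdim
  obtain ⟨e1, he1, hσ⟩ := hφ.exists_sign_isOPDiffeoGerm_comp_scaleCoord (q := 0) (by omega)
  obtain ⟨e2, he2, hτ⟩ := hΦ.exists_sign_isOPDiffeoGerm_scaleCoord_comp (q := n - 1) (by omega)
  refine ⟨e1, e2, he1, he2, _, _, hσ, hτ, ?_⟩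
  have hscale : Tendsto (scaleCoord m 0 e1) (𝓝 0) (𝓝 0) := by
    simpa using (scaleCoord m 0 e1).continuous.tendsto 0
  filter_upwards [hscale.eventually hfh] with x hx
  simp only [Function.comp_apply, hx, scaleCoord_hMorinNF_scaleCoord hm hmn hr]
end
end

section
/- Let r be even and ε_1,ε_2 ∈ {±1}. Then there exist orientation-preserving diffeomorphism-germs σ : (ℝ^m,0) → (ℝ^m,0) and τ : (ℝ^n,0) → (ℝ^n,0) with τ∘h_{r,(ε_1,ε_2)}∘σ = h_{r,(ε_1,1)} as germs at 0. Moreover, if m > r(n−m+1), then there exist orientation-preserving diffeomorphism-germs σ', τ' with τ'∘h_{r,(ε_1,ε_2)}∘σ' = h_{0,r} as germs at 0. -/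
open Filter Topology Matrix

noncomputable section

/-! ### Auxiliary machinery -/

lemma xhat_scale {m : ℕ} (d : ℕ → ℝ) (x : Fin m → ℝ) (q : ℕ) :
    xhat (fun i : Fin m => d i.val * x i) q = d q * xhat x q := by
  unfold xhat; split_ifs with h
  · rfl
  · rw [mul_zero]

def dmapCLM (k : ℕ) (d : ℕ → ℝ) : (Fin k → ℝ) →L[ℝ] (Fin k → ℝ) :=
  ContinuousLinearMap.pi (fun i => d i.val • ContinuousLinearMap.proj i)

lemma det_dmap (k : ℕ) (d : ℕ → ℝ) :
    LinearMap.det ((dmapCLM k d).toLinearMap) = ∏ i : Fin k, d i.val := by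
  have hM : LinearMap.toMatrix' ((dmapCLM k d).toLinearMap)
      = Matrix.diagonal (fun i : Fin k => d i.val) := by
    ext i j
    rw [LinearMap.toMatrix'_apply]
    by_cases h : i = j <;>
      simp [dmapCLM, Matrix.diagonal, Pi.single_apply, h]
  rw [← LinearMap.det_toMatrix', hM, Matrix.det_diagonal]

lemma isOPDiffeoGerm_dmap (k : ℕ) (d : ℕ → ℝ) (hprod : ∏ i : Fin k, d i.val = 1) :
    IsOPDiffeoGerm (fun x (i : Fin k) => d i.val * x i) := by
  have hcoe : (fun x (i : Fin k) => d i.val * x i) = ⇑(dmapCLM k d) := rfl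
  refine ⟨?_, ?_, ?_⟩
  · funext i; simp
  · rw [hcoe]; exact (dmapCLM k d).contDiff.contDiffAt
  · rw [hcoe, ContinuousLinearMap.fderiv, det_dmap, hprod]; norm_num

lemma prodA (k r : ℕ) (hrk : r ≤ k) (e : ℝ) :
    ∏ i : Fin k, (if (i : ℕ) < r then e else 1) = e ^ r := by
  rw [Fin.prod_univ_eq_prod_range (fun q => if q < r then e else 1) k,
    ← Finset.prod_range_mul_prod_Ico _ hrk]
  rw [Finset.prod_congr rfl (fun q hq => if_pos (Finset.mem_range.mp hq)),
    Finset.prod_const, Finset.card_range,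
    Finset.prod_eq_one (fun q hq => if_neg (by have := (Finset.mem_Ico.mp hq).1; omega)), mul_one]

lemma prodB (k a : ℕ) (hak : a < k) (e : ℝ) :
    ∏ i : Fin k, (if (i : ℕ) = a then e else 1) = e := by
  rw [Fin.prod_univ_eq_prod_range (fun q => if q = a then e else 1) k,
    Finset.prod_ite_eq' (Finset.range k) a (fun _ => e), if_pos (Finset.mem_range.mpr hak)]

lemma pow_even_eq_one {r : ℕ} (hre : Even r) (a : ℝ) (ha : a * a = 1) : a ^ r = 1 := by
  obtain ⟨t, ht⟩ := hre
  rw [ht, ← two_mul, pow_mul, sq, ha, one_pow]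

lemma key1 {m n r : ℕ} (e1 e2 : ℝ) (h2 : e2 * e2 = 1)
    (hmn : m < n) (hr : 2 ≤ r) (hdim : r * (n - m + 1) ≤ m)
    (d c : ℕ → ℝ)
    (hd : ∀ q, q < r → d q = e2) (hd1 : ∀ q, r ≤ q → d q = 1)
    (hcr : ∀ q, q < r → c q = e2) (hcm : c (m - 1) = e2) (hcn : c (n - 1) = e2)
    (hc1 : ∀ q, r ≤ q → q ≠ m - 1 → q ≠ n - 1 → c q = 1)
    (x : Fin m → ℝ) (k : Fin n) :
    c k.val * hSign m n r e1 e2 (fun i => d i.val * x i) k = hSign m n r e1 1 x k := by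
  have hk := k.isLt
  have h2r : 2 * r ≤ m := by
    calc 2 * r = r * 2 := by ring
      _ ≤ r * (n - m + 1) := Nat.mul_le_mul_left r (by omega)
      _ ≤ m := hdim
  simp only [hSign, xhat_scale]
  split_ifs with hk0 hkm hkm1 hmid
  · -- k = 0
    rw [hk0, hcr 0 (by omega), hd 0 (by omega)]
    linear_combination e1 * xhat x 0 * h2
  · -- 0 < k < m-1
    by_cases hkr : k.val < r
    · rw [hcr _ hkr, hd _ hkr]
      linear_combination xhat x k.val * h2
    · rw [hc1 _ (by omega) (by omega) (by omega), hd1 _ (by omega)]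
      ring
  · -- k = m-1
    rw [hkm1, hcm, hd 0 (by omega), hd1 (m - 1) (by omega)]
    have hs : ∑ j ∈ Finset.Ico 1 r, d j * xhat x j * (1 * xhat x (m - 1)) ^ (j + 1)
        = e2 * ∑ j ∈ Finset.Ico 1 r, xhat x j * xhat x (m - 1) ^ (j + 1) := by
      rw [Finset.mul_sum]
      refine Finset.sum_congr rfl fun j hj => ?_
      rw [hd j (Finset.mem_Ico.mp hj).2]; ring
    rw [hs]
    linear_combination (e1 * xhat x 0 * xhat x (m - 1)
      + ∑ j ∈ Finset.Ico 1 r, xhat x j * xhat x (m - 1) ^ (j + 1)) * h2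
  · -- middle
    obtain ⟨A, hA⟩ : ∃ A, (k.val - (m - 1)) * r = A := ⟨_, rfl⟩
    obtain ⟨B, hB⟩ : ∃ B, (n - m) * r = B := ⟨_, rfl⟩
    have e1' : A + r ≤ B := by
      rw [← hA, ← hB]
      calc (k.val - (m - 1)) * r + r = ((k.val - (m - 1)) + 1) * r := by ring
        _ ≤ (n - m) * r := Nat.mul_le_mul_right r (by omega)
    have e2' : B + r ≤ m := by
      rw [← hB]
      calc (n - m) * r + r = r * (n - m + 1) := by ring
        _ ≤ m := hdim
    have e3' : r ≤ A := by rw [← hA]; exact Nat.le_mul_of_pos_left r (by omega)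
    simp only [hA]
    rw [hc1 k.val (by omega) (by omega) (by omega), hd1 (m - 1) (by omega), one_mul]
    refine Finset.sum_congr rfl fun j hj => ?_
    have hjr := Finset.mem_range.mp hj
    rw [hd1 (A + j) (by omega), one_mul, one_mul]
  · -- last, k = n-1
    have hkn : k.val = n - 1 := by omega
    obtain ⟨B, hB⟩ : ∃ B, (n - m) * r = B := ⟨_, rfl⟩
    have e2' : B + r ≤ m := by
      rw [← hB]
      calc (n - m) * r + r = r * (n - m + 1) := by ring
        _ ≤ m := hdim
    have e3' : r ≤ B := by rw [← hB]; exact Nat.le_mul_of_pos_left r (by omega)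
    simp only [hB]
    rw [hkn, hcn, hd1 (m - 1) (by omega)]
    have hs : ∑ j ∈ Finset.range (r - 1),
          d (B + j) * xhat x (B + j) * (1 * xhat x (m - 1)) ^ (j + 1)
        = ∑ j ∈ Finset.range (r - 1), xhat x (B + j) * xhat x (m - 1) ^ (j + 1) := by
      refine Finset.sum_congr rfl fun j hj => ?_
      rw [hd1 (B + j) (by omega)]; ring
    rw [hs]
    linear_combination ((∑ j ∈ Finset.range (r - 1), xhat x (B + j) * xhat x (m - 1) ^ (j + 1))
      + xhat x (m - 1) ^ (r + 1)) * h2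

lemma key2 {m n r : ℕ} (e1 e2 : ℝ) (h1 : e1 * e1 = 1) (h2 : e2 * e2 = 1)
    (hmn : m < n) (hr : 2 ≤ r) (hdim : r * (n - m + 1) + 1 ≤ m)
    (d c : ℕ → ℝ)
    (hd0 : d 0 = e2) (hdr : ∀ q, 1 ≤ q → q < r → d q = e1 * e2)
    (hdm2 : d (m - 2) = e1) (hd1 : ∀ q, r ≤ q → q ≠ m - 2 → d q = 1)
    (hc0 : c 0 = e1 * e2) (hcr : ∀ q, 1 ≤ q → q < r → c q = e1 * e2)
    (hcm2 : c (m - 2) = e1) (hcm1 : c (m - 1) = e1 * e2) (hcn : c (n - 1) = e2)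
    (hc1 : ∀ q, r ≤ q → q ≠ m - 2 → q ≠ m - 1 → q ≠ n - 1 → c q = 1)
    (x : Fin m → ℝ) (k : Fin n) :
    c k.val * hSign m n r e1 e2 (fun i => d i.val * x i) k = hMorinNF m n r x k := by
  have hk := k.isLt
  have h2r : 2 * r ≤ m := by
    calc 2 * r = r * 2 := by ring
      _ ≤ r * (n - m + 1) := Nat.mul_le_mul_left r (by omega)
      _ ≤ m := by omega
  simp only [hSign, hMorinNF, xhat_scale]
  split_ifs with hk0 hkm hkm' hkm1 hmid hmid'
  all_goals try (exfalso; omega)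
  · -- k = 0, k < m-1
    rw [hk0, hc0, hd0]
    linear_combination xhat x 0 * (e1 * e1 * h2 + h1)
  · -- 0 < k < m-1
    by_cases hkr : k.val < r
    · rw [hcr _ (by omega) hkr, hdr _ (by omega) hkr]
      linear_combination xhat x k.val * (e1 * e1 * h2 + h1)
    · by_cases hkm2 : k.val = m - 2
      · rw [hkm2, hcm2, hdm2]
        linear_combination xhat x (m-2) * h1
      · rw [hc1 _ (by omega) hkm2 (by omega) (by omega), hd1 _ (by omega) hkm2]
        ring
  · -- k = m-1
    rw [hmid, hcm1, hd0, hd1 (m - 1) (by omega) (by omega)]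
    simp only [Nat.sub_self, Nat.zero_mul, Nat.zero_add]
    rw [Finset.range_eq_Ico, Finset.sum_eq_sum_Ico_succ_bot (by omega : 0 < r)
      (fun j => xhat x j * xhat x (m - 1) ^ (j + 1))]
    have hs : ∑ j ∈ Finset.Ico 1 r, d j * xhat x j * (1 * xhat x (m - 1)) ^ (j + 1)
        = (e1 * e2) * ∑ j ∈ Finset.Ico 1 r, xhat x j * xhat x (m - 1) ^ (j + 1) := by
      rw [Finset.mul_sum]
      refine Finset.sum_congr rfl fun j hj => ?_
      have := Finset.mem_Ico.mp hj
      rw [hdr j this.1 this.2]; ring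
    rw [hs]
    norm_num
    linear_combination (xhat x 0 * xhat x (m - 1)
      + ∑ j ∈ Finset.Ico 1 r, xhat x j * xhat x (m - 1) ^ (j + 1)) * (e1 * e1 * h2 + h1)
  · -- middle
    obtain ⟨A, hA⟩ : ∃ A, (k.val - (m - 1)) * r = A := ⟨_, rfl⟩
    obtain ⟨B, hB⟩ : ∃ B, (n - m) * r = B := ⟨_, rfl⟩
    have e1' : A + r ≤ B := by
      rw [← hA, ← hB]
      calc (k.val - (m - 1)) * r + r = ((k.val - (m - 1)) + 1) * r := by ring
        _ ≤ (n - m) * r := Nat.mul_le_mul_right r (by omega)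
    have e2' : B + r + 1 ≤ m := by
      rw [← hB]
      calc (n - m) * r + r + 1 = r * (n - m + 1) + 1 := by ring
        _ ≤ m := hdim
    have e3' : r ≤ A := by rw [← hA]; exact Nat.le_mul_of_pos_left r (by omega)
    simp only [hA]
    rw [hc1 k.val (by omega) (by omega) (by omega) (by omega),
      hd1 (m - 1) (by omega) (by omega), one_mul]
    refine Finset.sum_congr rfl fun j hj => ?_
    have hjr := Finset.mem_range.mp hj
    rw [hd1 (A + j) (by omega) (by omega), one_mul, one_mul]
  · -- last, k = n-1
    have hkn : k.val = n - 1 := by omega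
    obtain ⟨B, hB⟩ : ∃ B, (n - m) * r = B := ⟨_, rfl⟩
    have e2' : B + r + 1 ≤ m := by
      rw [← hB]
      calc (n - m) * r + r + 1 = r * (n - m + 1) + 1 := by ring
        _ ≤ m := hdim
    have e3' : r ≤ B := by rw [← hB]; exact Nat.le_mul_of_pos_left r (by omega)
    simp only [hB]
    rw [hkn, hcn, hd1 (m - 1) (by omega) (by omega)]
    have hs : ∑ j ∈ Finset.range (r - 1),
          d (B + j) * xhat x (B + j) * (1 * xhat x (m - 1)) ^ (j + 1)
        = ∑ j ∈ Finset.range (r - 1), xhat x (B + j) * xhat x (m - 1) ^ (j + 1) := by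
      refine Finset.sum_congr rfl fun j hj => ?_
      have hjr := Finset.mem_range.mp hj
      rw [hd1 (B + j) (by omega) (by omega)]; ring
    rw [hs]
    linear_combination ((∑ j ∈ Finset.range (r - 1), xhat x (B + j) * xhat x (m - 1) ^ (j + 1))
      + xhat x (m - 1) ^ (r + 1)) * h2

/-- Proposition, part (I). If `r` is even then `h_{r,(ε₁,ε₂)}` is
`A`-isotopic to `h_{r,(ε₁,1)}`: they agree after composing with orientation-preserving
diffeomorphism-germs.  Moreover, if `m > r(n-m+1)` then `h_{r,(ε₁,ε₂)}` is `A`-isotopic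
to `h_{0,r}`. -/
theorem stmt15 {m n r : ℕ} (hmn : m < n) (hr : 1 ≤ r) (hre : Even r)
    (hdim : r * (n - m + 1) ≤ m)
    (e1 e2 : ℝ) (he1 : e1 = 1 ∨ e1 = -1) (he2 : e2 = 1 ∨ e2 = -1) :
    (∃ (σ : (Fin m → ℝ) → (Fin m → ℝ)) (τ : (Fin n → ℝ) → (Fin n → ℝ)),
      IsOPDiffeoGerm σ ∧ IsOPDiffeoGerm τ ∧
      ∀ᶠ x in 𝓝 (0 : Fin m → ℝ), τ (hSign m n r e1 e2 (σ x)) = hSign m n r e1 1 x) ∧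
    (r * (n - m + 1) < m →
      ∃ (σ : (Fin m → ℝ) → (Fin m → ℝ)) (τ : (Fin n → ℝ) → (Fin n → ℝ)),
        IsOPDiffeoGerm σ ∧ IsOPDiffeoGerm τ ∧
        ∀ᶠ x in 𝓝 (0 : Fin m → ℝ), τ (hSign m n r e1 e2 (σ x)) = hMorinNF m n r x) := by
  have hsq : ∀ a : ℝ, a = 1 ∨ a = -1 → a * a = 1 := by rintro a (rfl | rfl) <;> norm_num
  have h1 := hsq e1 he1
  have h2 := hsq e2 he2
  have hE : (e1 * e2) * (e1 * e2) = 1 := by linear_combination e2 * e2 * h1 + h2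
  have hr2 : 2 ≤ r := by obtain ⟨t, ht⟩ := hre; omega
  have h2r : 2 * r ≤ m := by
    calc 2 * r = r * 2 := by ring
      _ ≤ r * (n - m + 1) := Nat.mul_le_mul_left r (by omega)
      _ ≤ m := hdim
  constructor
  · -- Part 1
    refine ⟨fun x i => (if (i : ℕ) < r then e2 else 1) * x i,
      fun y k => ((if (k : ℕ) < r then e2 else 1) *
        ((if (k : ℕ) = m - 1 then e2 else 1) * (if (k : ℕ) = n - 1 then e2 else 1))) * y k,
      ?_, ?_, ?_⟩
    · refine isOPDiffeoGerm_dmap m (fun q => if q < r then e2 else 1) ?_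
      show ∏ i : Fin m, (if (i : ℕ) < r then e2 else 1) = 1
      rw [prodA m r (by omega) e2, pow_even_eq_one hre e2 h2]
    · refine isOPDiffeoGerm_dmap n (fun q => (if q < r then e2 else 1) *
        ((if q = m - 1 then e2 else 1) * (if q = n - 1 then e2 else 1))) ?_
      show ∏ i : Fin n, ((if (i : ℕ) < r then e2 else 1) *
        ((if (i : ℕ) = m - 1 then e2 else 1) * (if (i : ℕ) = n - 1 then e2 else 1))) = 1
      rw [Finset.prod_mul_distrib, Finset.prod_mul_distrib,
        prodA n r (by omega) e2, prodB n (m - 1) (by omega) e2, prodB n (n - 1) (by omega) e2,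
        pow_even_eq_one hre e2 h2, one_mul, h2]
    · refine Filter.Eventually.of_forall fun x => funext fun k => ?_
      exact key1 e1 e2 h2 hmn hr2 hdim
        (fun q => if q < r then e2 else 1)
        (fun q => (if q < r then e2 else 1) *
          ((if q = m - 1 then e2 else 1) * (if q = n - 1 then e2 else 1)))
        (fun q hq => if_pos hq) (fun q hq => if_neg (by omega))
        (fun q hq => by beta_reduce; rw [if_pos hq, if_neg (by omega : ¬q = m - 1),
          if_neg (by omega : ¬q = n - 1)]; ring)
        (by beta_reduce; rw [if_neg (by omega : ¬m - 1 < r), if_pos rfl,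
          if_neg (by omega : ¬m - 1 = n - 1)]; ring)
        (by beta_reduce; rw [if_neg (by omega : ¬n - 1 < r), if_neg (by omega : ¬n - 1 = m - 1),
          if_pos rfl]; ring)
        (fun q hq hq1 hq2 => by beta_reduce; rw [if_neg (by omega), if_neg hq1, if_neg hq2]; ring)
        x k
  · -- Part 2
    intro hdim2
    have hdim2' : r * (n - m + 1) + 1 ≤ m := hdim2
    refine ⟨fun x i => ((if (i : ℕ) < r then e1 * e2 else 1) *
        ((if (i : ℕ) = 0 then e1 else 1) * (if (i : ℕ) = m - 2 then e1 else 1))) * x i,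
      fun y k => ((if (k : ℕ) < r then e1 * e2 else 1) *
        ((if (k : ℕ) = m - 1 then e1 * e2 else 1) *
          ((if (k : ℕ) = m - 2 then e1 else 1) * (if (k : ℕ) = n - 1 then e2 else 1)))) * y k,
      ?_, ?_, ?_⟩
    · refine isOPDiffeoGerm_dmap m (fun q => (if q < r then e1 * e2 else 1) *
        ((if q = 0 then e1 else 1) * (if q = m - 2 then e1 else 1))) ?_
      show ∏ i : Fin m, ((if (i : ℕ) < r then e1 * e2 else 1) *
        ((if (i : ℕ) = 0 then e1 else 1) * (if (i : ℕ) = m - 2 then e1 else 1))) = 1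
      rw [Finset.prod_mul_distrib, Finset.prod_mul_distrib,
        prodA m r (by omega) (e1 * e2), prodB m 0 (by omega) e1, prodB m (m - 2) (by omega) e1,
        pow_even_eq_one hre (e1 * e2) hE, one_mul, h1]
    · refine isOPDiffeoGerm_dmap n (fun q => (if q < r then e1 * e2 else 1) *
        ((if q = m - 1 then e1 * e2 else 1) *
          ((if q = m - 2 then e1 else 1) * (if q = n - 1 then e2 else 1)))) ?_
      show ∏ i : Fin n, ((if (i : ℕ) < r then e1 * e2 else 1) *
        ((if (i : ℕ) = m - 1 then e1 * e2 else 1) *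
          ((if (i : ℕ) = m - 2 then e1 else 1) * (if (i : ℕ) = n - 1 then e2 else 1)))) = 1
      rw [Finset.prod_mul_distrib, Finset.prod_mul_distrib, Finset.prod_mul_distrib,
        prodA n r (by omega) (e1 * e2), prodB n (m - 1) (by omega) (e1 * e2),
        prodB n (m - 2) (by omega) e1, prodB n (n - 1) (by omega) e2,
        pow_even_eq_one hre (e1 * e2) hE, one_mul]
      exact hE
    · refine Filter.Eventually.of_forall fun x => funext fun k => ?_
      exact key2 e1 e2 h1 h2 hmn hr2 hdim2'
        (fun q => (if q < r then e1 * e2 else 1) *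
          ((if q = 0 then e1 else 1) * (if q = m - 2 then e1 else 1)))
        (fun q => (if q < r then e1 * e2 else 1) *
          ((if q = m - 1 then e1 * e2 else 1) *
            ((if q = m - 2 then e1 else 1) * (if q = n - 1 then e2 else 1))))
        (by beta_reduce; rw [if_pos (by omega : 0 < r), if_pos rfl, if_neg (by omega : ¬(0:ℕ) = m - 2)]
            linear_combination e2 * h1)
        (fun q hq0 hqr => by
          beta_reduce; rw [if_pos hqr, if_neg (by omega : ¬q = 0), if_neg (by omega : ¬q = m - 2)]; ring)
        (by beta_reduce; rw [if_neg (by omega : ¬m - 2 < r), if_neg (by omega : ¬m - 2 = 0), if_pos rfl]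
            ring)
        (fun q hq hq2 => by
          beta_reduce; rw [if_neg (by omega), if_neg (by omega : ¬q = 0), if_neg hq2]; ring)
        (by beta_reduce; rw [if_pos (by omega : 0 < r), if_neg (by omega : ¬(0:ℕ) = m - 1),
            if_neg (by omega : ¬(0:ℕ) = m - 2), if_neg (by omega : ¬(0:ℕ) = n - 1)]; ring)
        (fun q hq0 hqr => by
          beta_reduce; rw [if_pos hqr, if_neg (by omega : ¬q = m - 1), if_neg (by omega : ¬q = m - 2),
            if_neg (by omega : ¬q = n - 1)]; ring)
        (by beta_reduce; rw [if_neg (by omega : ¬m - 2 < r), if_neg (by omega : ¬m - 2 = m - 1), if_pos rfl,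
            if_neg (by omega : ¬m - 2 = n - 1)]; ring)
        (by beta_reduce; rw [if_neg (by omega : ¬m - 1 < r), if_pos rfl, if_neg (by omega : ¬m - 1 = m - 2),
            if_neg (by omega : ¬m - 1 = n - 1)]; ring)
        (by beta_reduce; rw [if_neg (by omega : ¬n - 1 < r), if_neg (by omega : ¬n - 1 = m - 1),
            if_neg (by omega : ¬n - 1 = m - 2), if_pos rfl]; ring)
        (fun q hq hq2 hq1 hqn => by
          beta_reduce; rw [if_neg (by omega), if_neg hq1, if_neg hq2, if_neg hqn]; ring)
        x k
end
end

section
/- Let r be odd and ε_1,ε_2 ∈ {±1}. Then there exist orientation-preserving diffeomorphism-germs σ : (ℝ^m,0) → (ℝ^m,0) and τ : (ℝ^n,0) → (ℝ^n,0) with τ∘h_{r,(ε_1,ε_2)}∘σ = h_{r,(1,ε_2)} as germs at 0. Moreover, if m > r(n−m+1), then there exist orientation-preserving diffeomorphism-germs σ', τ' with τ'∘h_{r,(ε_1,ε_2)}∘σ' = h_{0,r} as germs at 0. -/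
open Filter Topology Matrix

noncomputable section

/- ### Auxiliary machinery for the proof -/

/-- Diagonal (coordinatewise scaling) map. -/
def dsc {m : ℕ} (a : ℕ → ℝ) : (Fin m → ℝ) → (Fin m → ℝ) := fun x k => a k.val * x k

/-- The same map as a continuous linear map. -/
def dscL {m : ℕ} (a : ℕ → ℝ) : (Fin m → ℝ) →L[ℝ] (Fin m → ℝ) :=
  ContinuousLinearMap.pi fun i : Fin m => a i.val • ContinuousLinearMap.proj i

lemma dsc_eq {m : ℕ} (a : ℕ → ℝ) : dsc (m := m) a = ⇑(dscL (m := m) a) := by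
  funext x k
  simp [dsc, dscL]

lemma det_dscL {m : ℕ} (a : ℕ → ℝ) :
    LinearMap.det (dscL (m := m) a).toLinearMap = ∏ i : Fin m, a i.val := by
  rw [← LinearMap.det_toMatrix' ((dscL (m := m) a).toLinearMap)]
  have : LinearMap.toMatrix' (dscL (m := m) a).toLinearMap
      = Matrix.diagonal (fun i : Fin m => a i.val) := by
    ext i j
    by_cases h : i = j <;>
      simp [LinearMap.toMatrix'_apply, dscL, Matrix.diagonal, Pi.single_apply, h]
  rw [this, Matrix.det_diagonal]

lemma isOPDiffeoGerm_dsc {k : ℕ} (a : ℕ → ℝ) (h : ∏ i : Fin k, a i.val = 1) :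
    IsOPDiffeoGerm (dsc (m := k) a) := by
  refine ⟨by funext i; simp [dsc], ?_, ?_⟩
  · rw [dsc_eq]; exact (dscL (m := k) a).contDiff.contDiffAt
  · rw [dsc_eq, ContinuousLinearMap.fderiv, det_dscL, h]; norm_num

lemma xhat_dsc {m : ℕ} (a : ℕ → ℝ) (x : Fin m → ℝ) (q : ℕ) :
    xhat (dsc a x) q = a q * xhat x q := by
  unfold xhat; split_ifs <;> simp [dsc]

lemma sign_pow_even {c : ℝ} (hc : c = 1 ∨ c = -1) {d : ℕ} (hd : Even d) : c ^ d = 1 := by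
  rcases hc with rfl | rfl
  · exact one_pow d
  · exact hd.neg_one_pow

lemma prod_ite_card {N : ℕ} (c : ℝ) (p : ℕ → Prop) [DecidablePred p] :
    ∏ i : Fin N, (if p i.val then c else 1)
      = c ^ ((Finset.range N).filter p).card := by
  rw [Fin.prod_univ_eq_prod_range (fun k => if p k then c else 1) N,
    ← Finset.prod_filter, Finset.prod_const]

/-- The master computation: a pair of coordinatewise sign changes conjugates
`hSign m n r e1 e2` into `hSign m n r 1 ee2`, provided the signs satisfy the
listed compatibility conditions. -/
lemma master {m n r : ℕ} (hm2 : 2 ≤ m) (hmn : m < n) (hr : 1 ≤ r)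
    (e1 e2 ee2 : ℝ) (a b : ℕ → ℝ)
    (H1 : a (m - 1) = 1)
    (H2 : b 0 * (e1 * a 0) = 1)
    (H3 : ∀ k, 1 ≤ k → k < m - 1 → b k * a k = 1)
    (H4 : b (m - 1) * (e1 * a 0) = 1)
    (H5 : ∀ j, 1 ≤ j → j < r → b (m - 1) * a j = 1)
    (H6 : ∀ q, m ≤ q → q < n - 1 → b q = 1)
    (H7 : ∀ i j, 1 ≤ i → i < n - m → j < r → a (i * r + j) = 1)
    (H7' : ∀ j, j < r - 1 → a ((n - m) * r + j) = 1)
    (H8 : b (n - 1) * e2 = ee2) :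
    ∀ x : Fin m → ℝ, dsc b (hSign m n r e1 e2 (dsc a x)) = hSign m n r 1 ee2 x := by
  intro x
  funext k
  show b k.val * (hSign m n r e1 e2 (dsc a x) k) = hSign m n r 1 ee2 x k
  unfold hSign
  by_cases h0 : k.val = 0
  · rw [if_pos h0, if_pos h0, xhat_dsc, h0]
    linear_combination xhat x 0 * H2
  · rw [if_neg h0, if_neg h0]
    by_cases h1 : k.val < m - 1
    · rw [if_pos h1, if_pos h1, xhat_dsc]
      linear_combination xhat x k.val * H3 k.val (by omega) h1
    · rw [if_neg h1, if_neg h1]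
      by_cases h2 : k.val = m - 1
      · rw [if_pos h2, if_pos h2]
        simp only [xhat_dsc, H1, one_mul, h2]
        rw [mul_add, Finset.mul_sum]
        congr 1
        · linear_combination (xhat x 0 * xhat x (m - 1)) * H4
        · refine Finset.sum_congr rfl fun j hj => ?_
          rw [Finset.mem_Ico] at hj
          linear_combination (xhat x j * xhat x (m - 1) ^ (j + 1)) * H5 j hj.1 hj.2
      · rw [if_neg h2, if_neg h2]
        by_cases h3 : k.val - (m - 1) < n - m
        · rw [if_pos h3, if_pos h3]
          rw [H6 k.val (by omega) (by omega), one_mul]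
          refine Finset.sum_congr rfl fun j hj => ?_
          rw [Finset.mem_range] at hj
          rw [xhat_dsc, xhat_dsc, H1, one_mul,
            H7 (k.val - (m - 1)) j (by omega) h3 hj, one_mul]
        · rw [if_neg h3, if_neg h3]
          have hk : k.val = n - 1 := by
            have := k.isLt; omega
          have hs : ∀ j ∈ Finset.range (r - 1),
              xhat (dsc a x) ((n - m) * r + j) * (xhat (dsc a x) (m - 1)) ^ (j + 1)
                = xhat x ((n - m) * r + j) * (xhat x (m - 1)) ^ (j + 1) := by
            intro j hj
            rw [Finset.mem_range] at hj
            rw [xhat_dsc, xhat_dsc, H1, one_mul, H7' j hj, one_mul]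
          rw [Finset.sum_congr rfl hs, xhat_dsc, H1, one_mul, hk]
          linear_combination ((∑ j ∈ Finset.range (r - 1),
            xhat x ((n - m) * r + j) * (xhat x (m - 1)) ^ (j + 1))
              + (xhat x (m - 1)) ^ (r + 1)) * H8

lemma hSign_one_one {m n r : ℕ} (hm2 : 2 ≤ m) (hmn : m < n) (hr : 1 ≤ r) :
    hSign m n r 1 1 = hMorinNF m n r := by
  funext x k
  unfold hSign hMorinNF
  by_cases h0 : k.val = 0
  · rw [if_pos h0, if_pos (by omega : k.val < m - 1), one_mul, h0]
  · rw [if_neg h0]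
    by_cases h1 : k.val < m - 1
    · rw [if_pos h1, if_pos h1]
    · rw [if_neg h1, if_neg h1]
      by_cases h2 : k.val = m - 1
      · rw [if_pos h2, if_pos (by omega : k.val - (m - 1) < n - m)]
        have hcongr : ∀ j ∈ Finset.range r, xhat x ((k.val - (m - 1)) * r + j)
            * (xhat x (m - 1)) ^ (j + 1) = xhat x j * (xhat x (m - 1)) ^ (j + 1) := by
          intro j hj
          rw [h2, Nat.sub_self, zero_mul, zero_add]
        rw [Finset.sum_congr rfl hcongr, Finset.range_eq_Ico,
          Finset.sum_eq_sum_Ico_succ_bot hr, zero_add, pow_one, one_mul]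
      · rw [if_neg h2]
        by_cases h3 : k.val - (m - 1) < n - m
        · rw [if_pos h3, if_pos h3]
        · rw [if_neg h3, if_neg h3, one_mul]

/-- Sign data for the first part of the statement. -/
def sA1 (r : ℕ) (e1 : ℝ) : ℕ → ℝ := fun k => if 1 ≤ k ∧ k < r then e1 else 1

def sB1 (m r : ℕ) (e1 : ℝ) : ℕ → ℝ :=
  fun q => if q = 0 ∨ q = m - 1 ∨ (1 ≤ q ∧ q < r) then e1 else 1

/-- Sign data for the second part of the statement. -/
def sA2 (m r : ℕ) (e1 e2 : ℝ) : ℕ → ℝ := fun k =>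
  (if k = 0 ∨ k = m - 2 then e2 else 1) * (if 1 ≤ k ∧ k < r then e1 * e2 else 1)

def sB2 (m n r : ℕ) (e1 e2 : ℝ) : ℕ → ℝ := fun q =>
  (if q = 0 ∨ q = m - 1 ∨ (1 ≤ q ∧ q < r) then e1 * e2 else 1)
    * (if q = m - 2 ∨ q = n - 1 then e2 else 1)
/-- Proposition, part (II). If `r` is odd then `h_{r,(ε₁,ε₂)}` is
`A`-isotopic to `h_{r,(1,ε₂)}`: they agree after composing with orientation-preserving
diffeomorphism-germs.  Moreover, if `m > r(n-m+1)` then `h_{r,(ε₁,ε₂)}` is `A`-isotopic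
to `h_{0,r}`. -/
theorem stmt16 {m n r : ℕ} (hmn : m < n) (hr : 1 ≤ r) (hro : Odd r)
    (hdim : r * (n - m + 1) ≤ m)
    (e1 e2 : ℝ) (he1 : e1 = 1 ∨ e1 = -1) (he2 : e2 = 1 ∨ e2 = -1) :
    (∃ (σ : (Fin m → ℝ) → (Fin m → ℝ)) (τ : (Fin n → ℝ) → (Fin n → ℝ)),
      IsOPDiffeoGerm σ ∧ IsOPDiffeoGerm τ ∧
      ∀ᶠ x in 𝓝 (0 : Fin m → ℝ), τ (hSign m n r e1 e2 (σ x)) = hSign m n r 1 e2 x) ∧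
    (r * (n - m + 1) < m →
      ∃ (σ : (Fin m → ℝ) → (Fin m → ℝ)) (τ : (Fin n → ℝ) → (Fin n → ℝ)),
        IsOPDiffeoGerm σ ∧ IsOPDiffeoGerm τ ∧
        ∀ᶠ x in 𝓝 (0 : Fin m → ℝ), τ (hSign m n r e1 e2 (σ x)) = hMorinNF m n r x) := by
  obtain ⟨s, hs⟩ := hro
  have he1sq : e1 * e1 = 1 := by rcases he1 with rfl | rfl <;> norm_num
  have he2sq : e2 * e2 = 1 := by rcases he2 with rfl | rfl <;> norm_num
  have he12 : e1 * e2 = 1 ∨ e1 * e2 = -1 := by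
    rcases he1 with rfl | rfl <;> rcases he2 with rfl | rfl <;> norm_num
  have h2r : 2 * r ≤ m := by
    have := Nat.mul_le_mul_left r (show 2 ≤ n - m + 1 by omega)
    omega
  have hm2 : 2 ≤ m := by omega
  constructor
  · -- Part 1 : reduce `e1` to `1`.
    refine ⟨dsc (sA1 r e1), dsc (sB1 m r e1), isOPDiffeoGerm_dsc _ ?_,
      isOPDiffeoGerm_dsc _ ?_,
      Filter.Eventually.of_forall
        (master hm2 hmn hr e1 e2 e2 (sA1 r e1) (sB1 m r e1)
          ?_ ?_ ?_ ?_ ?_ ?_ ?_ ?_ ?_)⟩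
    · -- product of σ-signs is 1
      unfold sA1
      rw [prod_ite_card e1 (fun k => 1 ≤ k ∧ k < r)]
      have hf : (Finset.range m).filter (fun k => 1 ≤ k ∧ k < r) = Finset.Ico 1 r := by
        ext k
        simp only [Finset.mem_filter, Finset.mem_range, Finset.mem_Ico]
        omega
      rw [hf, Nat.card_Ico]
      exact sign_pow_even he1 ⟨s, by omega⟩
    · -- product of τ-signs is 1
      unfold sB1
      rw [prod_ite_card e1 (fun q => q = 0 ∨ q = m - 1 ∨ (1 ≤ q ∧ q < r))]
      have hf : (Finset.range n).filter (fun q => q = 0 ∨ q = m - 1 ∨ (1 ≤ q ∧ q < r))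
          = insert 0 (insert (m - 1) (Finset.Ico 1 r)) := by
        ext k
        simp only [Finset.mem_filter, Finset.mem_range, Finset.mem_insert, Finset.mem_Ico]
        omega
      have h1 : (m - 1) ∉ Finset.Ico 1 r := by
        simp only [Finset.mem_Ico]; omega
      have h0 : (0 : ℕ) ∉ insert (m - 1) (Finset.Ico 1 r) := by
        simp only [Finset.mem_insert, Finset.mem_Ico]; omega
      rw [hf, Finset.card_insert_of_notMem h0, Finset.card_insert_of_notMem h1,
        Nat.card_Ico]
      exact sign_pow_even he1 ⟨s + 1, by omega⟩
    · -- H1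
      unfold sA1
      rw [if_neg (by omega)]
    · -- H2
      unfold sA1 sB1
      rw [if_pos (Or.inl rfl), if_neg (by omega)]
      linear_combination he1sq
    · -- H3
      intro k hk1 hk2
      unfold sA1 sB1
      split_ifs with h h' <;>
        first
          | linear_combination he1sq
          | (exfalso; omega)
          | norm_num
    · -- H4
      unfold sA1 sB1
      rw [if_pos (Or.inr (Or.inl rfl)), if_neg (by omega)]
      linear_combination he1sq
    · -- H5
      intro j hj1 hj2
      unfold sA1 sB1
      rw [if_pos (Or.inr (Or.inl rfl)), if_pos ⟨hj1, hj2⟩]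
      linear_combination he1sq
    · -- H6
      intro q hq1 hq2
      unfold sB1
      rw [if_neg (by omega)]
    · -- H7
      intro i j hi1 hi2 hj
      have t4 : 1 * r ≤ i * r := Nat.mul_le_mul_right r hi1
      unfold sA1
      rw [if_neg (by omega)]
    · -- H7'
      intro j hj
      have t4 : 1 * r ≤ (n - m) * r := Nat.mul_le_mul_right r (by omega)
      unfold sA1
      rw [if_neg (by omega)]
    · -- H8
      unfold sB1
      rw [if_neg (by omega), one_mul]
  · -- Part 2 : reduce to the Morin normal form.
    intro hdim2
    have h21 : 2 * r + 1 ≤ m := by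
      have := Nat.mul_le_mul_left r (show 2 ≤ n - m + 1 by omega)
      omega
    have pA : ∏ i : Fin m, sA2 m r e1 e2 i.val = 1 := by
      unfold sA2
      rw [Finset.prod_mul_distrib,
        prod_ite_card e2 (fun k => k = 0 ∨ k = m - 2),
        prod_ite_card (e1 * e2) (fun k => 1 ≤ k ∧ k < r)]
      have hf1 : (Finset.range m).filter (fun k => k = 0 ∨ k = m - 2)
          = insert 0 {m - 2} := by
        ext k
        simp only [Finset.mem_filter, Finset.mem_range, Finset.mem_insert,
          Finset.mem_singleton]
        omega
      have hf2 : (Finset.range m).filter (fun k => 1 ≤ k ∧ k < r) = Finset.Ico 1 r := by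
        ext k
        simp only [Finset.mem_filter, Finset.mem_range, Finset.mem_Ico]
        omega
      rw [hf1, hf2, Finset.card_insert_of_notMem (by simp only [Finset.mem_singleton]; omega),
        Finset.card_singleton, Nat.card_Ico,
        sign_pow_even he2 ⟨1, rfl⟩, sign_pow_even he12 ⟨s, by omega⟩, one_mul]
    have pB : ∏ i : Fin n, sB2 m n r e1 e2 i.val = 1 := by
      unfold sB2
      rw [Finset.prod_mul_distrib,
        prod_ite_card (e1 * e2) (fun q => q = 0 ∨ q = m - 1 ∨ (1 ≤ q ∧ q < r)),
        prod_ite_card e2 (fun q => q = m - 2 ∨ q = n - 1)]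
      have hf1 : (Finset.range n).filter (fun q => q = 0 ∨ q = m - 1 ∨ (1 ≤ q ∧ q < r))
          = insert 0 (insert (m - 1) (Finset.Ico 1 r)) := by
        ext k
        simp only [Finset.mem_filter, Finset.mem_range, Finset.mem_insert, Finset.mem_Ico]
        omega
      have hf2 : (Finset.range n).filter (fun q => q = m - 2 ∨ q = n - 1)
          = insert (m - 2) {n - 1} := by
        ext k
        simp only [Finset.mem_filter, Finset.mem_range, Finset.mem_insert,
          Finset.mem_singleton]
        omega
      have h1 : (m - 1) ∉ Finset.Ico 1 r := by
        simp only [Finset.mem_Ico]; omega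
      have h0 : (0 : ℕ) ∉ insert (m - 1) (Finset.Ico 1 r) := by
        simp only [Finset.mem_insert, Finset.mem_Ico]; omega
      rw [hf1, hf2, Finset.card_insert_of_notMem h0, Finset.card_insert_of_notMem h1,
        Finset.card_insert_of_notMem (by simp only [Finset.mem_singleton]; omega),
        Finset.card_singleton, Nat.card_Ico,
        sign_pow_even he12 ⟨s + 1, by omega⟩, sign_pow_even he2 ⟨1, rfl⟩, one_mul]
    have key := master hm2 hmn hr e1 e2 1 (sA2 m r e1 e2) (sB2 m n r e1 e2)
      (by -- H1
        unfold sA2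
        rw [if_neg (by omega), if_neg (by omega), one_mul])
      (by -- H2
        unfold sA2 sB2
        rw [if_pos (Or.inl rfl), if_neg (by omega), if_pos (Or.inl rfl),
          if_neg (by omega)]
        linear_combination (e2 * e2) * he1sq + he2sq)
      (by -- H3
        intro k hk1 hk2
        unfold sA2 sB2
        split_ifs <;>
          first
            | linear_combination (e2 * e2) * he1sq + he2sq
            | linear_combination he2sq
            | linear_combination he1sq
            | (exfalso; omega)
            | norm_num)
      (by -- H4
        unfold sA2 sB2
        rw [if_pos (Or.inr (Or.inl rfl)), if_neg (by omega), if_pos (Or.inl rfl),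
          if_neg (by omega)]
        linear_combination (e2 * e2) * he1sq + he2sq)
      (by -- H5
        intro j hj1 hj2
        unfold sA2 sB2
        rw [if_pos (Or.inr (Or.inl rfl)), if_neg (by omega),
          if_neg (by omega), if_pos ⟨hj1, hj2⟩]
        linear_combination (e2 * e2) * he1sq + he2sq)
      (by -- H6
        intro q hq1 hq2
        unfold sB2
        rw [if_neg (by omega), if_neg (by omega), one_mul])
      (by -- H7
        intro i j hi1 hi2 hj
        have t1 : (i + 1) * r ≤ (n - m) * r := Nat.mul_le_mul_right r (by omega)
        have t2 : (i + 1) * r = i * r + r := by ring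
        have t3 : (n - m) * r + r = r * (n - m + 1) := by ring
        have t4 : 1 * r ≤ i * r := Nat.mul_le_mul_right r hi1
        unfold sA2
        rw [if_neg (by omega), if_neg (by omega), one_mul])
      (by -- H7'
        intro j hj
        have t3 : (n - m) * r + r = r * (n - m + 1) := by ring
        have t4 : 1 * r ≤ (n - m) * r := Nat.mul_le_mul_right r (by omega)
        unfold sA2
        rw [if_neg (by omega), if_neg (by omega), one_mul])
      (by -- H8
        unfold sB2
        rw [if_neg (by omega), if_pos (Or.inr rfl), one_mul]
        linear_combination he2sq)
    exact ⟨dsc (sA2 m r e1 e2), dsc (sB2 m n r e1 e2),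
      isOPDiffeoGerm_dsc _ pA, isOPDiffeoGerm_dsc _ pB,
      Filter.Eventually.of_forall fun x => by
        rw [key x, hSign_one_one hm2 hmn hr]⟩
end
end

section
/- Let r ≡ 1 (mod 4), let a = n−m be odd, and assume m = r(n−m+1). Then there exist orientation-preserving diffeomorphism-germs σ : (ℝ^m,0) → (ℝ^m,0) and τ : (ℝ^n,0) → (ℝ^n,0) such that τ∘h_{r,(1,−1)}∘σ = h_{0,r} as germs at 0. -/
open Filter Topology Matrix

noncomputable section

/-! ### Auxiliary material for the proof -/

/-- The diagonal continuous linear map with `q`-th diagonal entry `c q`. -/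
def diagCLM {k : ℕ} (c : ℕ → ℝ) : (Fin k → ℝ) →L[ℝ] (Fin k → ℝ) :=
  ContinuousLinearMap.pi fun i => c i.val • ContinuousLinearMap.proj i

lemma diagCLM_apply {k : ℕ} (c : ℕ → ℝ) (x : Fin k → ℝ) (i : Fin k) :
    diagCLM c x i = c i.val * x i := by
  simp [diagCLM]

lemma diagCLM_det {k : ℕ} (c : ℕ → ℝ) :
    LinearMap.det ((diagCLM (k := k) c).toLinearMap) = ∏ i : Fin k, c i.val := by
  rw [← LinearMap.det_toMatrix (Pi.basisFun ℝ (Fin k))]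
  have h : LinearMap.toMatrix (Pi.basisFun ℝ (Fin k)) (Pi.basisFun ℝ (Fin k))
      (diagCLM c).toLinearMap = Matrix.diagonal fun i : Fin k => c i.val := by
    ext i j
    rw [LinearMap.toMatrix_apply]
    simp [diagCLM, Matrix.diagonal, Pi.single_apply, eq_comm]
  rw [h, Matrix.det_diagonal]

lemma diagCLM_OP {k : ℕ} (c : ℕ → ℝ) (h : 0 < ∏ i : Fin k, c i.val) :
    IsOPDiffeoGerm (⇑(diagCLM (k := k) c)) :=
  ⟨(diagCLM c).map_zero, (diagCLM c).contDiff.contDiffAt, by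
    rw [(diagCLM c).fderiv, diagCLM_det]; exact h⟩

lemma xhat_diagCLM {m : ℕ} (c : ℕ → ℝ) (x : Fin m → ℝ) (q : ℕ) :
    xhat (diagCLM c x) q = c q * xhat x q := by
  unfold xhat
  by_cases h : q < m
  · rw [dif_pos h, dif_pos h, diagCLM_apply]
  · rw [dif_neg h, dif_neg h, mul_zero]

lemma sum_range_mod (r c : ℕ) :
    ∑ k ∈ Finset.range (r * c), k % r = c * ∑ j ∈ Finset.range r, j := by
  induction c with
  | zero => simp
  | succ c ih =>
    rw [Nat.mul_succ, Finset.sum_range_add, ih]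
    have h : ∀ x ∈ Finset.range r, (r * c + x) % r = x := by
      intro x hx
      rw [Nat.add_comm (r * c) x, Nat.mul_comm, Nat.add_mul_mod_self_right,
        Nat.mod_eq_of_lt (Finset.mem_range.mp hx)]
    rw [Finset.sum_congr rfl h]
    ring

/-- Signs of the source diffeomorphism: `csgn r q = (-1) ^ (q % r + 1)`. -/
def csgn (r q : ℕ) : ℝ := (-1) ^ (q % r + 1)

/-- Signs of the target diffeomorphism. -/
def dsgn (m n r q : ℕ) : ℝ := if q < m - 1 then csgn r q else if q = n - 1 then -1 else 1

lemma csgn_sq (r q : ℕ) : csgn r q * csgn r q = 1 := by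
  unfold csgn
  rw [← pow_add]
  exact Even.neg_one_pow ⟨q % r + 1, by ring⟩

lemma csgn_lt (r j : ℕ) (hj : j < r) : csgn r j = (-1) ^ (j + 1) := by
  unfold csgn
  rw [Nat.mod_eq_of_lt hj]

lemma csgn_idx (r i j : ℕ) (hj : j < r) : csgn r (i * r + j) = (-1) ^ (j + 1) := by
  unfold csgn
  rw [Nat.add_comm (i * r) j, Nat.add_mul_mod_self_right, Nat.mod_eq_of_lt hj]

lemma csgn_zero (r : ℕ) : csgn r 0 = -1 := by
  unfold csgn
  rw [Nat.zero_mod, pow_one]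

lemma sign_cancel (A B : ℝ) (j : ℕ) :
    ((-1 : ℝ) ^ (j + 1) * A) * ((-1) * B) ^ (j + 1) = A * B ^ (j + 1) := by
  rw [mul_pow]
  have hs : ((-1 : ℝ)) ^ (j + 1) * (-1) ^ (j + 1) = 1 := by
    rw [← pow_add]; exact Even.neg_one_pow ⟨j + 1, by ring⟩
  linear_combination A * B ^ (j + 1) * hs

/-- Case `r ≡ 1 (mod 4)`, `a = n-m` odd, `m = r(n-m+1)`:
`h_{r,(1,-1)}` is `A`-isotopic to `h_{0,r}` via orientation-preserving
diffeomorphism-germs. -/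
theorem stmt17 {m n r : ℕ} (hmn : m < n) (hr : r % 4 = 1) (ha : Odd (n - m))
    (hdim : m = r * (n - m + 1)) :
    ∃ (σ : (Fin m → ℝ) → (Fin m → ℝ)) (τ : (Fin n → ℝ) → (Fin n → ℝ)),
      IsOPDiffeoGerm σ ∧ IsOPDiffeoGerm τ ∧
      ∀ᶠ x in 𝓝 (0 : Fin m → ℝ), τ (hSign m n r 1 (-1) (σ x)) = hMorinNF m n r x := by
  have hr1 : 1 ≤ r := by omega
  have hodd_r : Odd r := Nat.odd_iff.mpr (by omega)
  have hre : Even (r + 1) := hodd_r.add_one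
  set a := n - m with hadef
  have ha1 : 1 ≤ a := by omega
  have hm2 : 2 ≤ m := by
    have h2 : 1 * 2 ≤ r * (a + 1) := Nat.mul_le_mul hr1 (by omega)
    omega
  have hmr : a * r + r = m := by rw [hdim]; ring
  have hcm : csgn r (m - 1) = -1 := by
    have hm1 : m - 1 = (r - 1) + a * r := by omega
    unfold csgn
    rw [hm1, Nat.add_mul_mod_self_right, Nat.mod_eq_of_lt (by omega)]
    have h : r - 1 + 1 = r := by omega
    rw [h]
    exact Odd.neg_one_pow hodd_r
  have hprodc : ∏ i : Fin m, csgn r i.val = 1 := by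
    rw [Fin.prod_univ_eq_prod_range]
    unfold csgn
    rw [Finset.prod_pow_eq_pow_sum]
    apply Even.neg_one_pow
    have hsum : (∑ k ∈ Finset.range m, (k % r + 1))
        = (a + 1) * (∑ j ∈ Finset.range r, j) + m := by
      rw [Finset.sum_add_distrib, Finset.sum_const, Finset.card_range, smul_eq_mul, mul_one]
      congr 1
      rw [hdim]
      exact sum_range_mod r (a + 1)
    rw [hsum]
    have hea : Even (a + 1) := ha.add_one
    exact (hea.mul_right _).add (by rw [hdim]; exact hea.mul_left r)
  have hprodc' : ∏ q ∈ Finset.range (m - 1), csgn r q = -1 := by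
    have h := hprodc
    rw [Fin.prod_univ_eq_prod_range] at h
    have hm' : m = (m - 1) + 1 := by omega
    rw [hm', Finset.prod_range_succ, hcm] at h
    linarith
  have hprodd : ∏ i : Fin n, dsgn m n r i.val = 1 := by
    rw [Fin.prod_univ_eq_prod_range]
    have hsplit : Finset.range n = Finset.range ((m - 1) + (a + 1)) := by
      congr 1
      omega
    rw [hsplit, Finset.prod_range_add]
    have h1 : ∏ q ∈ Finset.range (m - 1), dsgn m n r q = -1 := by
      rw [← hprodc']
      refine Finset.prod_congr rfl fun q hq => ?_
      unfold dsgn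
      rw [if_pos (Finset.mem_range.mp hq)]
    have h2 : ∏ x ∈ Finset.range (a + 1), dsgn m n r ((m - 1) + x) = -1 := by
      rw [Finset.prod_range_succ]
      have e1 : ∀ x ∈ Finset.range a, dsgn m n r ((m - 1) + x) = 1 := by
        intro x hx
        have hx' := Finset.mem_range.mp hx
        unfold dsgn
        rw [if_neg (by omega), if_neg (by omega)]
      rw [Finset.prod_congr rfl e1, Finset.prod_const_one, one_mul]
      unfold dsgn
      rw [if_neg (by omega), if_pos (by omega)]
    rw [h1, h2]
    norm_num
  refine ⟨⇑(diagCLM (csgn r)), ⇑(diagCLM (dsgn m n r)), ?_, ?_, ?_⟩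
  · exact diagCLM_OP _ (by rw [hprodc]; norm_num)
  · exact diagCLM_OP _ (by rw [hprodd]; norm_num)
  refine Filter.Eventually.of_forall fun x => ?_
  funext k
  have hkn : k.val < n := k.isLt
  have hx : ∀ q, xhat (diagCLM (csgn r) x) q = csgn r q * xhat x q :=
    fun q => xhat_diagCLM (csgn r) x q
  show diagCLM (dsgn m n r) (hSign m n r 1 (-1) (diagCLM (csgn r) x)) k = hMorinNF m n r x k
  rw [diagCLM_apply]
  simp only [hSign, hMorinNF, hx]
  unfold dsgn
  split_ifs with h1 h2 h3 h4 h5 h6 h7 h8 h9 h10 h11 h12 h13 <;> try omega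
  · -- k = 0
    rw [h2, csgn_zero]
    ring
  · -- 0 < k < m - 1
    rw [← mul_assoc, csgn_sq, one_mul]
  · -- k = n - 1 (last component)
    rw [hcm]
    have hdn : ∀ X : ℝ, (-1 : ℝ) * (-1 * X) = X := fun X => by ring
    rw [hdn]
    congr 1
    · refine Finset.sum_congr rfl fun j hj => ?_
      have hj' : j < r := by
        have := Finset.mem_range.mp hj
        omega
      rw [csgn_idx r (n - m) j hj']
      exact sign_cancel _ _ j
    · rw [neg_one_mul]
      exact hre.neg_pow _
  · -- k = m - 1 (first of the middle components)
    rw [h11, Nat.sub_self]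
    simp only [zero_mul, zero_add]
    rw [Finset.range_eq_Ico, Finset.sum_eq_sum_Ico_succ_bot (show 0 < r by omega), one_mul]
    congr 1
    · rw [csgn_zero, hcm]
      ring
    · refine Finset.sum_congr rfl fun j hj => ?_
      have hj' : j < r := (Finset.mem_Ico.mp hj).2
      rw [hcm, csgn_lt r j hj']
      exact sign_cancel _ _ j
  · -- generic middle component
    rw [one_mul]
    refine Finset.sum_congr rfl fun j hj => ?_
    rw [hcm, csgn_idx r _ j (Finset.mem_range.mp hj)]
    exact sign_cancel _ _ j
end
end

section
/- Let r ≡ 2 (mod 4), let a = n−m be even, and assume m = r(n−m+1). Then there exist orientation-preserving diffeomorphism-germs σ : (ℝ^m,0) → (ℝ^m,0) and τ : (ℝ^n,0) → (ℝ^n,0) such that τ∘h_{r,(−1,1)}∘σ = h_{0,r} as germs at 0. -/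
open Filter Topology Matrix

noncomputable section

namespace Stmt18Aux

/-- input sign pattern -/
def sg (a r q : ℕ) : ℝ :=
  if q = 0 then -1
  else if q / r = 0 ∨ q / r = a then (-1) ^ (q % r)
  else (-1) ^ (q % r + 1)

/-- output sign pattern -/
def tg (a r m q : ℕ) : ℝ :=
  if q = 0 then 1 else if q < m then sg a r q else if q = m + a - 1 then -1 else 1

lemma sg_sq (a r q : ℕ) : sg a r q * sg a r q = 1 := by
  unfold sg
  split_ifs
  · norm_num
  all_goals (rw [← pow_add]; exact Even.neg_one_pow ⟨_, rfl⟩)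

lemma sg_zero (a r : ℕ) : sg a r 0 = -1 := by simp [sg]

lemma sg_block (a r i j : ℕ) (hj : j < r) (h0 : ¬(i = 0 ∧ j = 0)) :
    sg a r (i * r + j) = if i = 0 ∨ i = a then (-1 : ℝ) ^ j else (-1) ^ (j + 1) := by
  have hr0 : 0 < r := lt_of_le_of_lt (Nat.zero_le j) hj
  have hq0 : i * r + j ≠ 0 := by
    rcases Nat.eq_zero_or_pos i with h | h
    · subst h
      simp only [Nat.zero_mul, Nat.zero_add]
      exact fun hj0 => h0 ⟨rfl, hj0⟩
    · have : 0 < i * r := Nat.mul_pos h hr0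
      omega
  have hdiv : (i * r + j) / r = i := by
    rw [mul_comm, Nat.mul_add_div hr0, Nat.div_eq_of_lt hj, Nat.add_zero]
  have hmod : (i * r + j) % r = j := by
    rw [mul_comm, Nat.mul_add_mod, Nat.mod_eq_of_lt hj]
  unfold sg
  rw [if_neg hq0, hdiv, hmod]

lemma odd_sum_range {r : ℕ} (hr4 : r % 4 = 2) : Odd (∑ j ∈ Finset.range r, j) := by
  obtain ⟨k, hk⟩ : ∃ k, r = 4 * k + 2 := ⟨r / 4, by omega⟩
  have h2 : (∑ j ∈ Finset.range r, j) * 2 = ((2 * k + 1) * (4 * k + 1)) * 2 := by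
    rw [Finset.sum_range_id_mul_two, hk]
    have h4 : 4 * k + 2 - 1 = 4 * k + 1 := by omega
    rw [h4]; ring
  have h3 := Nat.eq_of_mul_eq_mul_right (by norm_num : 0 < 2) h2
  rw [h3]
  exact Odd.mul ⟨k, by ring⟩ ⟨2 * k, by ring⟩

lemma prod_npow {r : ℕ} (hr4 : r % 4 = 2) :
    ∏ j ∈ Finset.range r, ((-1 : ℝ)) ^ j = -1 := by
  rw [Finset.prod_pow_eq_pow_sum]
  exact Odd.neg_one_pow (odd_sum_range hr4)

lemma prod_npow' {r : ℕ} (hr4 : r % 4 = 2) :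
    ∏ j ∈ Finset.range r, ((-1 : ℝ)) ^ (j + 1) = -1 := by
  rw [Finset.prod_pow_eq_pow_sum]
  apply Odd.neg_one_pow
  rw [Finset.sum_add_distrib, Finset.sum_const, Finset.card_range, smul_eq_mul, mul_one]
  obtain ⟨k, hk⟩ : ∃ k, r = 4 * k + 2 := ⟨r / 4, by omega⟩
  exact (odd_sum_range hr4).add_even ⟨2 * k + 1, by omega⟩

lemma prod_range_mul (f : ℕ → ℝ) (r B : ℕ) :
    ∏ q ∈ Finset.range (r * B), f q
      = ∏ i ∈ Finset.range B, ∏ j ∈ Finset.range r, f (i * r + j) := by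
  induction B with
  | zero => simp
  | succ B ih =>
    rw [Finset.prod_range_succ, ← ih, Nat.mul_succ, Finset.prod_range_add, mul_comm B r]

lemma prod_range_peel_bot (f : ℕ → ℝ) (B : ℕ) (hB : B ≠ 0) :
    ∏ i ∈ Finset.range B, f i = (∏ k ∈ Finset.range (B - 1), f (k + 1)) * f 0 := by
  obtain ⟨B', rfl⟩ : ∃ B', B = B' + 1 := ⟨B - 1, by omega⟩
  rw [Finset.prod_range_succ', Nat.add_sub_cancel]

lemma prod_range_peel_top (f : ℕ → ℝ) (B : ℕ) (hB : B ≠ 0) :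
    ∏ i ∈ Finset.range B, f i = (∏ k ∈ Finset.range (B - 1), f k) * f (B - 1) := by
  obtain ⟨B', rfl⟩ : ∃ B', B = B' + 1 := ⟨B - 1, by omega⟩
  rw [Finset.prod_range_succ, Nat.add_sub_cancel]

lemma blk_mid {a r : ℕ} (hr4 : r % 4 = 2) {i : ℕ} (hi0 : i ≠ 0) (hia : i ≠ a) :
    ∏ j ∈ Finset.range r, sg a r (i * r + j) = -1 := by
  rw [Finset.prod_congr rfl fun j hj => ?_]
  · exact prod_npow' hr4
  · rw [sg_block a r i j (Finset.mem_range.mp hj) (by tauto), if_neg (by tauto)]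

lemma blk_last {a r : ℕ} (hr4 : r % 4 = 2) (ha : a ≠ 0) :
    ∏ j ∈ Finset.range r, sg a r (a * r + j) = -1 := by
  rw [Finset.prod_congr rfl fun j hj => ?_]
  · exact prod_npow hr4
  · rw [sg_block a r a j (Finset.mem_range.mp hj) (by tauto), if_pos (Or.inr rfl)]

lemma blk0 {a r : ℕ} (hr4 : r % 4 = 2) :
    ∏ j ∈ Finset.range r, sg a r (0 * r + j) = 1 := by
  have hr0 : r ≠ 0 := by omega
  rw [prod_range_peel_bot _ r hr0]
  have h1 : ∀ k ∈ Finset.range (r - 1), sg a r (0 * r + (k + 1)) = (-1 : ℝ) ^ (k + 1) := by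
    intro k hk
    simp only [Finset.mem_range] at hk
    rw [sg_block a r 0 (k + 1) (by omega) (by simp), if_pos (Or.inl rfl)]
  rw [Finset.prod_congr rfl h1]
  have h2 : ∏ k ∈ Finset.range (r - 1), ((-1 : ℝ)) ^ (k + 1) = -1 := by
    have h3 := prod_npow hr4
    rwa [prod_range_peel_bot _ r hr0, pow_zero, mul_one] at h3
  have h4 : 0 * r + 0 = 0 := by omega
  rw [h2, h4, sg_zero]
  norm_num

lemma prod_sg {a r : ℕ} (hr4 : r % 4 = 2) (haE : Even a) (ha2 : 2 ≤ a) :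
    ∏ q ∈ Finset.range (r * (a + 1)), sg a r q = 1 := by
  rw [prod_range_mul, Finset.prod_range_succ,
    prod_range_peel_bot _ (a : ℕ) (by omega), Nat.zero_mul]
  have hmid : ∀ k ∈ Finset.range (a - 1),
      ∏ j ∈ Finset.range r, sg a r ((k + 1) * r + j) = -1 := by
    intro k hk
    simp only [Finset.mem_range] at hk
    exact blk_mid hr4 (by omega) (by omega)
  have h0 : ∏ j ∈ Finset.range r, sg a r (0 * r + j) = 1 := blk0 hr4
  rw [Nat.zero_mul] at h0
  rw [Finset.prod_congr rfl hmid, Finset.prod_const, Finset.card_range, h0,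
    blk_last hr4 (by omega)]
  have hodd : Odd (a - 1) := by
    rcases haE with ⟨b, hb⟩; exact ⟨b - 1, by omega⟩
  rw [hodd.neg_one_pow]
  norm_num

lemma prod_sg_tail {a r : ℕ} (hr4 : r % 4 = 2) (haE : Even a) (ha2 : 2 ≤ a) :
    ∏ k ∈ Finset.range (r * (a + 1) - 1), sg a r (k + 1) = -1 := by
  have h := prod_sg hr4 haE ha2
  have hne : r * (a + 1) ≠ 0 := Nat.mul_ne_zero (by omega) (by omega)
  rw [prod_range_peel_bot _ _ hne, sg_zero] at h
  linarith [h]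

lemma prod_tg {a r m : ℕ} (hr4 : r % 4 = 2) (haE : Even a) (ha2 : 2 ≤ a)
    (hm : m = r * (a + 1)) :
    ∏ q ∈ Finset.range (m + a), tg a r m q = 1 := by
  have hm0 : 2 ≤ m := by
    have h3 : 3 ≤ a + 1 := by omega
    calc 2 ≤ 2 * 3 := by norm_num
    _ ≤ r * (a + 1) := Nat.mul_le_mul (by omega) h3
    _ = m := hm.symm
  rw [Finset.prod_range_add]
  have h1 : ∏ q ∈ Finset.range m, tg a r m q = -1 := by
    rw [prod_range_peel_bot _ m (by omega)]
    have ht0 : tg a r m 0 = 1 := by simp [tg]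
    rw [ht0, mul_one]
    have hcg : ∀ k ∈ Finset.range (m - 1), tg a r m (k + 1) = sg a r (k + 1) := by
      intro k hk
      simp only [Finset.mem_range] at hk
      unfold tg
      rw [if_neg (by omega), if_pos (by omega)]
    rw [Finset.prod_congr rfl hcg]
    have h := prod_sg_tail hr4 haE ha2
    rwa [← hm] at h
  have h2 : ∏ i ∈ Finset.range a, tg a r m (m + i) = -1 := by
    rw [prod_range_peel_top _ a (by omega)]
    have hmid : ∀ i ∈ Finset.range (a - 1), tg a r m (m + i) = 1 := by
      intro i hi
      simp only [Finset.mem_range] at hi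
      unfold tg
      rw [if_neg (by omega), if_neg (by omega), if_neg (by omega)]
    have hlast : tg a r m (m + (a - 1)) = -1 := by
      unfold tg
      rw [if_neg (by omega), if_neg (by omega), if_pos (by omega)]
    rw [Finset.prod_congr rfl hmid, Finset.prod_const_one, hlast, one_mul]
  rw [h1, h2]
  norm_num

end Stmt18Aux

open Stmt18Aux

lemma diag_isOP {k : ℕ} (c : ℕ → ℝ) (hpos : 0 < ∏ q ∈ Finset.range k, c q) :
    IsOPDiffeoGerm (fun x (i : Fin k) => c i.val * x i) := by
  set L : (Fin k → ℝ) →L[ℝ] (Fin k → ℝ) :=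
    ContinuousLinearMap.pi (fun i : Fin k => c i.val • ContinuousLinearMap.proj i) with hL
  have hfun : (fun x (i : Fin k) => c i.val * x i) = ⇑L := by
    funext x i
    simp [hL, ContinuousLinearMap.proj]
  refine ⟨?_, ?_, ?_⟩
  · funext i; simp
  · rw [hfun]; exact L.contDiff.contDiffAt
  · rw [hfun, ContinuousLinearMap.fderiv]
    rw [← LinearMap.det_toMatrix (Pi.basisFun ℝ (Fin k))]
    have hmat : (LinearMap.toMatrix (Pi.basisFun ℝ (Fin k)) (Pi.basisFun ℝ (Fin k))
        L.toLinearMap) = Matrix.diagonal (fun i : Fin k => c i.val) := by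
      ext i j
      simp [hL, LinearMap.toMatrix_apply, Matrix.diagonal, Pi.basisFun_apply,
        ContinuousLinearMap.proj, Pi.single_apply, eq_comm]
    rw [hmat, Matrix.det_diagonal]
    rwa [Finset.prod_range (fun q => c q)] at hpos

lemma key_eq {m n r : ℕ} (hmn : m < n) (hr : r % 4 = 2) (ha : Even (n - m))
    (hdim : m = r * (n - m + 1)) (x : Fin m → ℝ) (k : Fin n) :
    tg (n - m) r m k.val
      * hSign m n r (-1) 1 (fun q : Fin m => sg (n - m) r q.val * x q) k
      = hMorinNF m n r x k := by
  set a := n - m with ha'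
  have hr2 : 2 ≤ r := by omega
  obtain ⟨u, hu⟩ : ∃ u, r = 4 * u + 2 := ⟨r / 4, by omega⟩
  have ha1 : 1 ≤ a := by omega
  have ha2 : 2 ≤ a := by rcases ha with ⟨b, hb⟩; omega
  have hm : m = r * (a + 1) := hdim
  have hm6 : 6 ≤ m := by
    calc 6 = 2 * 3 := by norm_num
    _ ≤ r * (a + 1) := Nat.mul_le_mul hr2 (by omega)
    _ = m := hm.symm
  have hn : n = m + a := by omega
  have hm1 : m - 1 = a * r + (r - 1) := by
    have h1 : m = a * r + (r - 1) + 1 := by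
      have h2 : r - 1 + 1 = r := by omega
      rw [hm, Nat.add_assoc, h2]; ring
    omega
  have hsm : sg a r (m - 1) = -1 := by
    rw [hm1, sg_block a r a (r - 1) (by omega) (by rintro ⟨h, -⟩; omega),
      if_pos (Or.inr rfl)]
    exact Odd.neg_one_pow ⟨2 * u, by omega⟩
  have hxh : ∀ q, xhat (fun i : Fin m => sg a r i.val * x i) q = sg a r q * xhat x q := by
    intro q
    unfold xhat
    split
    · rfl
    · rw [mul_zero]
  rcases k with ⟨kv, hkv⟩
  show tg a r m kv * hSign m n r (-1) 1 _ ⟨kv, hkv⟩ = hMorinNF m n r x ⟨kv, hkv⟩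
  unfold hSign hMorinNF
  simp only [hxh]
  split_ifs with h0 h1 h1' h2 h3 h3' h4 <;>
    first
      | omega
      | skip
  case _ => -- kv = 0, goal uses first branches
    subst h0
    rw [sg_zero]
    have ht : tg a r m 0 = 1 := by simp [tg]
    rw [ht]; ring
  case _ => -- 0 < kv < m - 1
    have ht : tg a r m kv = sg a r kv := by
      unfold tg; rw [if_neg h0, if_pos (by omega)]
    rw [ht, ← mul_assoc, sg_sq, one_mul]
  case _ => -- kv = m - 1
    have ht : tg a r m kv = -1 := by
      unfold tg
      rw [if_neg h0, if_pos (by omega), h3]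
      exact hsm
    rw [ht, hsm, sg_zero]
    have hS : ∀ j ∈ Finset.Ico 1 r,
        sg a r j * xhat x j * (-1 * xhat x (m - 1)) ^ (j + 1)
          = -(xhat x j * xhat x (m - 1) ^ (j + 1)) := by
      intro j hj
      rw [Finset.mem_Ico] at hj
      have hsgj : sg a r j = (-1 : ℝ) ^ j := by
        have hb := sg_block a r 0 j hj.2 (by rintro ⟨-, h⟩; omega)
        rw [Nat.zero_mul, Nat.zero_add] at hb
        rw [hb, if_pos (Or.inl rfl)]
      have hpow : (-1 : ℝ) ^ j * (-1 : ℝ) ^ (j + 1) = -1 := by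
        rw [← pow_add]; exact Odd.neg_one_pow ⟨j, by ring⟩
      rw [hsgj, mul_pow]
      linear_combination (xhat x j * xhat x (m - 1) ^ (j + 1)) * hpow
    rw [Finset.sum_congr rfl hS, Finset.sum_neg_distrib]
    have hRHS : ∀ j ∈ Finset.range r,
        xhat x ((kv - (m - 1)) * r + j) * xhat x (m - 1) ^ (j + 1)
          = xhat x j * xhat x (m - 1) ^ (j + 1) := by
      intro j hj
      rw [h3, Nat.sub_self, Nat.zero_mul, Nat.zero_add]
    rw [Finset.sum_congr rfl hRHS, Finset.range_eq_Ico,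
      Finset.sum_eq_sum_Ico_succ_bot (by omega : 0 < r)]
    norm_num
    ring
  case _ => -- middle blocks
    have ht : tg a r m kv = 1 := by
      unfold tg
      rw [if_neg h0, if_neg (by omega), if_neg (by omega)]
    rw [ht, one_mul, hsm]
    refine Finset.sum_congr rfl fun j hj => ?_
    rw [Finset.mem_range] at hj
    have hsg : sg a r ((kv - (m - 1)) * r + j) = (-1 : ℝ) ^ (j + 1) := by
      rw [sg_block a r _ j hj (by rintro ⟨h, -⟩; omega),
        if_neg (by rintro (h | h) <;> omega)]
    have hpow : (-1 : ℝ) ^ (j + 1) * (-1 : ℝ) ^ (j + 1) = 1 := by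
      rw [← pow_add]; exact Even.neg_one_pow ⟨j + 1, by ring⟩
    rw [hsg, mul_pow]
    linear_combination (xhat x ((kv - (m - 1)) * r + j) * xhat x (m - 1) ^ (j + 1)) * hpow
  case _ => -- last component
    have ht : tg a r m kv = -1 := by
      unfold tg
      rw [if_neg h0, if_neg (by omega), if_pos (by omega)]
    rw [ht, one_mul, hsm, mul_add, Finset.mul_sum]
    congr 1
    · refine Finset.sum_congr rfl fun j hj => ?_
      rw [Finset.mem_range] at hj
      have hsg : sg a r ((n - m) * r + j) = (-1 : ℝ) ^ j := by
        rw [sg_block a r (n - m) j (by omega) (by rintro ⟨h, -⟩; omega),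
          if_pos (Or.inr rfl)]
      have hpow : (-1 : ℝ) ^ j * (-1 : ℝ) ^ (j + 1) = -1 := by
        rw [← pow_add]; exact Odd.neg_one_pow ⟨j, by ring⟩
      rw [hsg, mul_pow]
      linear_combination -(xhat x ((n - m) * r + j) * xhat x (m - 1) ^ (j + 1)) * hpow
    · rw [mul_pow]
      have hp : (-1 : ℝ) ^ (r + 1) = -1 := Odd.neg_one_pow ⟨2 * u + 1, by omega⟩
      rw [hp]; ring


/-- Case `r ≡ 2 (mod 4)`, `a = n-m` even, `m = r(n-m+1)`:
`h_{r,(-1,1)}` is `A`-isotopic to `h_{0,r}` via orientation-preserving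
diffeomorphism-germs. -/
theorem stmt18 {m n r : ℕ} (hmn : m < n) (hr : r % 4 = 2) (ha : Even (n - m))
    (hdim : m = r * (n - m + 1)) :
    ∃ (σ : (Fin m → ℝ) → (Fin m → ℝ)) (τ : (Fin n → ℝ) → (Fin n → ℝ)),
      IsOPDiffeoGerm σ ∧ IsOPDiffeoGerm τ ∧
      ∀ᶠ x in 𝓝 (0 : Fin m → ℝ), τ (hSign m n r (-1) 1 (σ x)) = hMorinNF m n r x := by
  have hr2 : 2 ≤ r := by omega
  have ha1 : 1 ≤ n - m := by omega
  have ha2 : 2 ≤ n - m := by rcases ha with ⟨b, hb⟩; omega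
  refine ⟨fun x (q : Fin m) => sg (n - m) r q.val * x q,
    fun y (i : Fin n) => tg (n - m) r m i.val * y i, ?_, ?_, ?_⟩
  · apply diag_isOP
    have h := prod_sg (a := n - m) (r := r) hr ha ha2
    rw [← hdim] at h
    rw [h]
    norm_num
  · apply diag_isOP
    have h := prod_tg (a := n - m) (r := r) (m := m) hr ha ha2 hdim
    rw [show m + (n - m) = n from by omega] at h
    rw [h]
    norm_num
  · exact Filter.Eventually.of_forall fun x => funext fun k => key_eq hmn hr ha hdim x k
end
end

section
/- Let r ≡ 3 (mod 4) and assume m = r(n−m+1). Then there exist orientation-preserving diffeomorphism-germs σ : (ℝ^m,0) → (ℝ^m,0) and τ : (ℝ^n,0) → (ℝ^n,0) such that τ∘h_{r,(1,−1)}∘σ = h_{0,r} as germs at 0. -/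
open Filter Topology Matrix

noncomputable section

/-!
With `ε₁ = 1`, `h_{r,(1,ε₂)}` is `h_{0,r}` with its last component multiplied by `ε₂`.
The source change `x_i ↦ (-1)^{(i mod r)+1} x_i` (`0`-indexed) sends `x_m` to `-x_m`, as `r` is
odd and `r ∣ m`, and flips `x_{br+j}` exactly when it flips `x_m^{j+1}`; so it fixes every
monomial `x_{br+j} x_m^{j+1}` and `x_m^{r+1}` and only changes signs of the first `m-1`
components of `h_{0,r}`. A diagonal target change undoes those signs and `ε₂ = -1`.
The source determinant is `((-1)^{r(r+1)/2})^{n-m+1} = 1` since `r ≡ 3 (mod 4)`; the target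
determinant is then `(-1)·(-1) = 1`, the first factor being the missing sign of `x_m`.
-/

open Finset

lemma isOPDiffeoGerm_of_det_pos {k : ℕ} (L : (Fin k → ℝ) →L[ℝ] (Fin k → ℝ))
    (hL : 0 < LinearMap.det (L : (Fin k → ℝ) →ₗ[ℝ] (Fin k → ℝ))) : IsOPDiffeoGerm L :=
  ⟨L.map_zero, L.contDiff.contDiffAt, by rwa [L.fderiv]⟩

lemma isOPDiffeoGerm_diagonal {k : ℕ} (c : Fin k → ℝ) (hc : 0 < ∏ i, c i) :
    IsOPDiffeoGerm (fun x i => c i * x i) := by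
  have hL := isOPDiffeoGerm_of_det_pos (Matrix.toLin' (diagonal c)).toContinuousLinearMap
    (by rwa [LinearMap.coe_toContinuousLinearMap, LinearMap.det_toLin', det_diagonal])
  convert hL using 1
  ext x i
  simp [Matrix.mulVec_diagonal]

lemma xhat_mul {m : ℕ} (c : ℕ → ℝ) (x : Fin m → ℝ) (q : ℕ) :
    xhat (fun i => c i * x i) q = c q * xhat x q := by
  unfold xhat
  split_ifs <;> simp

lemma neg_one_pow_mul_mul_neg_pow (e : ℕ) (a b : ℝ) : (-1) ^ e * a * (-b) ^ e = a * b ^ e := by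
  rw [neg_pow b, mul_mul_mul_comm, ← pow_add, ← two_mul, pow_mul]
  simp

/-- The coefficient `x_{br+j}` of `x_m^{j+1}` is flipped exactly when `x_m^{j+1}` is. -/
def coordSign (r k : ℕ) : ℝ := (-1) ^ (k % r + 1)

lemma coordSign_mul_self (r k : ℕ) : coordSign r k * coordSign r k = 1 := by
  rw [coordSign, ← mul_pow]; simp

lemma coordSign_mul_add {r j : ℕ} (b : ℕ) (hj : j < r) :
    coordSign r (b * r + j) = (-1) ^ (j + 1) := by
  rw [coordSign, Nat.mul_add_mod', Nat.mod_eq_of_lt hj]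

lemma coordSign_pred {r m : ℕ} (hr : Odd r) (hm : r ∣ m) (hm0 : 0 < m) :
    coordSign r (m - 1) = -1 := by
  obtain ⟨t, rfl⟩ := hm
  have ht : 0 < t := Nat.pos_of_mul_pos_left hm0
  have hr0 : 0 < r := hr.pos
  have hsplit : r * t - 1 = (t - 1) * r + (r - 1) := by
    rw [Nat.sub_one_mul, mul_comm t]
    have := Nat.le_mul_of_pos_right r ht
    omega
  rw [hsplit, coordSign_mul_add _ (by omega), Nat.sub_add_cancel hr0, hr.neg_one_pow]

lemma prod_range_neg_one_pow_succ {r : ℕ} (hr : r % 4 = 3) :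
    ∏ j ∈ range r, (-1 : ℝ) ^ (j + 1) = 1 := by
  rw [prod_pow_eq_pow_sum, sum_add_distrib, sum_const, card_range, smul_eq_mul, mul_one]
  apply Even.neg_one_pow
  have hgauss := sum_range_id_mul_two r
  obtain ⟨a, rfl⟩ : ∃ a, r = 4 * a + 3 := ⟨r / 4, by omega⟩
  rw [show (4 * a + 3) * (4 * a + 3 - 1) = (8 * a * a + 10 * a + 3) * 2 by
    rw [show 4 * a + 3 - 1 = 4 * a + 2 by omega]; ring] at hgauss
  rw [Nat.eq_of_mul_eq_mul_right two_pos hgauss]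
  exact ⟨4 * a * a + 7 * a + 3, by ring⟩

lemma prod_range_coordSign {r m : ℕ} (hr : r % 4 = 3) (hm : r ∣ m) :
    ∏ k ∈ range m, coordSign r k = 1 := by
  obtain ⟨t, rfl⟩ := hm
  induction t with
  | zero => simp
  | succ t ih =>
    rw [Nat.mul_succ, prod_range_add, ih, one_mul, ← prod_range_neg_one_pow_succ hr]
    exact prod_congr rfl fun j hj => by
      rw [mul_comm r t]; exact coordSign_mul_add t (mem_range.mp hj)

lemma sum_coordSign_monomials {m r N : ℕ} (hN : N ≤ r) (hlast : coordSign r (m - 1) = -1)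
    (x : Fin m → ℝ) (b : ℕ) :
    ∑ j ∈ range N, xhat (fun i => coordSign r i * x i) (b * r + j) *
        xhat (fun i => coordSign r i * x i) (m - 1) ^ (j + 1) =
      ∑ j ∈ range N, xhat x (b * r + j) * xhat x (m - 1) ^ (j + 1) := by
  refine sum_congr rfl fun j hj => ?_
  rw [xhat_mul, xhat_mul, hlast, neg_one_mul,
    coordSign_mul_add b (lt_of_lt_of_le (mem_range.mp hj) hN), neg_one_pow_mul_mul_neg_pow]

lemma hMorinNF_coordSign {m n r : ℕ} (hr : Odd r) (hm : r ∣ m) (hm0 : 0 < m)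
    (x : Fin m → ℝ) (k : Fin n) :
    hMorinNF m n r (fun i => coordSign r i * x i) k =
      (if k.val < m - 1 then coordSign r k else 1) * hMorinNF m n r x k := by
  have hlast := coordSign_pred hr hm hm0
  simp only [hMorinNF]
  split_ifs
  · exact xhat_mul _ _ _
  · rw [one_mul, sum_coordSign_monomials le_rfl hlast]
  · rw [one_mul, sum_coordSign_monomials (Nat.sub_le r 1) hlast, xhat_mul, hlast,
      neg_one_mul, hr.add_one.neg_pow]

lemma hSign_one_eq {m n r : ℕ} (hm : 2 ≤ m) (hmn : m < n) (hr : 0 < r) (e2 : ℝ)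
    (x : Fin m → ℝ) (k : Fin n) :
    hSign m n r 1 e2 x k = (if k.val = n - 1 then e2 else 1) * hMorinNF m n r x k := by
  have hk := k.isLt
  simp only [hSign, hMorinNF]
  split_ifs <;> first | omega | skip
  · rw [‹(k : ℕ) = 0›]
  · rw [one_mul]
  · rw [one_mul, one_mul, ‹(k : ℕ) = m - 1›, Nat.sub_self, range_eq_Ico,
      sum_eq_sum_Ico_succ_bot hr]
    simp
  · rw [one_mul]
  · rfl

def targetSign (m n r k : ℕ) : ℝ :=
  if k < m - 1 then coordSign r k else if k = n - 1 then -1 else 1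

lemma prod_range_targetSign {m n r : ℕ} (hmn : m < n) (hm0 : 0 < m)
    (hprod : ∏ k ∈ range m, coordSign r k = 1) (hlast : coordSign r (m - 1) = -1) :
    ∏ k ∈ range n, targetSign m n r k = 1 := by
  have hinit : ∏ k ∈ range (m - 1), coordSign r k = -1 := by
    rw [← Nat.sub_add_cancel hm0, prod_range_succ, hlast] at hprod
    linarith
  obtain ⟨n, rfl⟩ : ∃ n', n = n' + 1 := ⟨n - 1, by omega⟩
  unfold targetSign
  rw [Nat.add_sub_cancel, prod_range_succ, if_neg (by omega), if_pos rfl,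
    ← prod_range_mul_prod_Ico _ (show m - 1 ≤ n by omega),
    prod_congr rfl fun k hk => if_pos (mem_range.mp hk), hinit,
    prod_eq_one fun k hk => by simp only [mem_Ico] at hk; rw [if_neg (by omega), if_neg (by omega)]]
  norm_num

/-- Case `r ≡ 3 (mod 4)`, `m = r(n-m+1)`: `h_{r,(1,-1)}` is
`A`-isotopic to `h_{0,r}` via orientation-preserving diffeomorphism-germs. -/
theorem stmt19 {m n r : ℕ} (hmn : m < n) (hr : r % 4 = 3)
    (hdim : m = r * (n - m + 1)) :
    ∃ (σ : (Fin m → ℝ) → (Fin m → ℝ)) (τ : (Fin n → ℝ) → (Fin n → ℝ)),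
      IsOPDiffeoGerm σ ∧ IsOPDiffeoGerm τ ∧
      ∀ᶠ x in 𝓝 (0 : Fin m → ℝ), τ (hSign m n r 1 (-1) (σ x)) = hMorinNF m n r x := by
  have hodd : Odd r := Nat.odd_iff.mpr (by omega)
  have hdvd : r ∣ m := ⟨_, hdim⟩
  have hm2 : 2 ≤ m :=
    hdim ▸ (show 2 ≤ r by omega).trans (Nat.le_mul_of_pos_right r (Nat.succ_pos _))
  have hprod := prod_range_coordSign hr hdvd
  have hlast := coordSign_pred hodd hdvd (by omega)
  refine ⟨fun x i => coordSign r i * x i,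
    fun y k => targetSign m n r k * y k,
    isOPDiffeoGerm_diagonal _ ?_, isOPDiffeoGerm_diagonal _ ?_,
    Eventually.of_forall fun x => funext fun k => ?_⟩
  · rw [Fin.prod_univ_eq_prod_range (coordSign r), hprod]; exact one_pos
  · rw [Fin.prod_univ_eq_prod_range (targetSign m n r),
      prod_range_targetSign hmn (by omega) hprod hlast]
    exact one_pos
  · dsimp only
    rw [targetSign, hSign_one_eq hm2 hmn hodd.pos, hMorinNF_coordSign hodd hdvd (by omega)]
    split_ifs <;> first | omega | skip
    · rw [one_mul, ← mul_assoc, coordSign_mul_self, one_mul]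
    · ring
    · ring
end
end
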